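/- arXiv:1709.06357 — 6 statements merged into one kernel-verified Lean document; each statement's English description precedes it below -/
import Mathlib

section
/- The measure μ on X_τ constructed so that μ(S_n) = μ(S_1)/2^{n-1} is non-doubling whenever sup_n τ_n F-mass is unbounded appropriately; concretely, for the space X̂_{p0} with p0 > 1 (τ_n = ⌊(n+1)^{p0}/n⌋, F(n,i) = n), the ratio μ(B(x_n,2))/μ(B(x_n,1)) = μ(S_n)/μ({x_n}) = 1 + nτ_n → ∞, so μ is not doubling. -/
open Filter

/-- for the space `X̂_{p₀}` with `p₀ > 1` (branch `n` — the paper's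
branch `n+1` — has `τ n = ⌊(n+2)^{p₀}/(n+1)⌋` leaves of weight `(n+1) d n` each, so
that `μ(S_n) = d n (1 + (n+1) τ n)` while `μ({x_n}) = d n`), the ratio
`μ(B(x_n,2))/μ(B(x_n,1)) = 1 + (n+1) τ n` tends to infinity, and hence no doubling
constant exists: `μ` is non-doubling. -/
theorem Xhat_nondoubling (p0 : ℝ) (hp0 : 1 < p0) (τ : ℕ → ℕ)
    (hτ : ∀ n : ℕ, τ n = ⌊((n : ℝ) + 2) ^ p0 / ((n : ℝ) + 1)⌋₊) :
    Tendsto (fun n : ℕ => 1 + ((n : ℝ) + 1) * (τ n : ℝ)) atTop atTop ∧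
    ∀ d : ℕ → ℝ, (∀ n, 0 < d n) →
      ¬ ∃ C : ℝ, ∀ n : ℕ, d n * (1 + ((n : ℝ) + 1) * (τ n : ℝ)) ≤ C * d n := by
  have hτ1 : ∀ n : ℕ, (1 : ℝ) ≤ (τ n : ℝ) := by
    intro n
    have h1 : (1 : ℝ) ≤ ((n : ℝ) + 2) ^ p0 / ((n : ℝ) + 1) := by
      rw [le_div_iff₀ (by positivity)]
      calc (1 : ℝ) * ((n : ℝ) + 1) = (n : ℝ) + 1 := by ring
        _ ≤ (n : ℝ) + 2 := by linarith
        _ = ((n : ℝ) + 2) ^ (1 : ℝ) := by rw [Real.rpow_one]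
        _ ≤ ((n : ℝ) + 2) ^ p0 := by
            apply Real.rpow_le_rpow_left_iff (x := (n : ℝ) + 2) (by
              have : (0 : ℝ) ≤ (n : ℝ) := Nat.cast_nonneg n
              linarith) |>.mpr hp0.le
    have := Nat.one_le_floor_iff (((n : ℝ) + 2) ^ p0 / ((n : ℝ) + 1)) |>.mpr h1
    rw [hτ n]
    exact_mod_cast this
  have hge : ∀ n : ℕ, (n : ℝ) ≤ 1 + ((n : ℝ) + 1) * (τ n : ℝ) := by
    intro n
    have h1 := hτ1 n
    have h2 : ((n : ℝ) + 1) * 1 ≤ ((n : ℝ) + 1) * (τ n : ℝ) := by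
      apply mul_le_mul_of_nonneg_left h1 (by positivity)
    linarith
  have htend : Tendsto (fun n : ℕ => 1 + ((n : ℝ) + 1) * (τ n : ℝ)) atTop atTop :=
    tendsto_atTop_mono hge tendsto_natCast_atTop_atTop
  refine ⟨htend, ?_⟩
  rintro d hd ⟨C, hC⟩
  obtain ⟨n, hn⟩ := (htend.eventually_gt_atTop C).exists
  have := hC n
  have hdn := hd n
  nlinarith [this, hn, hdn]
end

section
/- Let p0 ∈ (1,∞) and let X̂_{p0} be the first generation space with τ_n = ⌊(n+1)^{p0}/n⌋ and F(n,i) = n. Then for every p ∈ [1, p0), the centered maximal operator M^c is not of weak type (p,p): for f_n = δ_{x_n}, one has ‖M^c f_n‖_{p,∞}^p / ‖f_n‖_p^p ≥ n τ_n / (2(n+1))^p → ∞ as n → ∞. -/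
/-!
Every leaf `x_{n,i}` sees the Dirac mass at the root `x_n` through the centered ball
`{x_n, x_{n,i}}`, of measure `(n+2) d_n`, so `M^c δ_{x_n} ≥ 1/(n+2)` on all `τ_n` leaves of
branch `n`, a set of measure `(n+1) τ_n d_n`, while `‖δ_{x_n}‖_p^p = d_n`. Testing the weak
norm at height `1/(2(n+2))` gives the ratio `(n+1) τ_n / (2(n+2))^p`, which is at least
`((n+2)^{p₀-p} - 1) / 2^p` by the choice of `τ_n`, hence unbounded for `p < p₀`.
(Branches are indexed from `0`: branch `n` is the paper's branch `n+1`.)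
-/

open scoped ENNReal Classical
open Filter Set

/-- The point set of a first generation space: roots `x_n` (`Sum.inl n`) and
leaves `x_{n,i}` (`Sum.inr ⟨n, i⟩`, `i` among `τ n` leaves of branch `n`). -/
abbrev XPt (τ : ℕ → ℕ) := ℕ ⊕ (Σ n : ℕ, Fin (τ n))

namespace FirstGen

/-- The root `x_n`. -/
def root (τ : ℕ → ℕ) (n : ℕ) : XPt τ := Sum.inl n

/-- The leaf `x_{n,i}`. -/
def leaf (τ : ℕ → ℕ) (n : ℕ) (i : Fin (τ n)) : XPt τ := Sum.inr ⟨n, i⟩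

/-- The branch `S_n = {x_n, x_{n,1}, …, x_{n,τ_n}}`. -/
def branch (τ : ℕ → ℕ) (n : ℕ) : Set (XPt τ) :=
  {x | x = root τ n ∨ ∃ i, x = leaf τ n i}

/-- The two-point set `{x_n, x_{n,i}}`. -/
def pairB (τ : ℕ → ℕ) (n : ℕ) (i : Fin (τ n)) : Set (XPt τ) :=
  {root τ n, leaf τ n i}

/-- The collection of all open balls of `X_τ`: singletons, pairs `{x_n, x_{n,i}}`,
branches `S_n` and the whole space. -/
def balls (τ : ℕ → ℕ) : Set (Set (XPt τ)) :=
  {B | (∃ x, B = {x}) ∨ (∃ n i, B = pairB τ n i) ∨ (∃ n, B = branch τ n) ∨ B = Set.univ}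

/-- The ball `B(x, 3/2)` centered at `x`. -/
def cball (τ : ℕ → ℕ) : XPt τ → Set (XPt τ)
  | Sum.inl n => branch τ n
  | Sum.inr ⟨n, i⟩ => pairB τ n i

/-- The weight (measure of the singleton): `μ({x_n}) = d n`,
`μ({x_{n,i}}) = d n * F n i`. -/
noncomputable def weight (τ : ℕ → ℕ) (d : ℕ → ℝ≥0∞)
    (F : (n : ℕ) → Fin (τ n) → ℝ≥0∞) : XPt τ → ℝ≥0∞
  | Sum.inl n => d n
  | Sum.inr ⟨n, i⟩ => d n * F n i

/-- Measure of a set. -/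
noncomputable def mass {τ : ℕ → ℕ} (w : XPt τ → ℝ≥0∞) (s : Set (XPt τ)) : ℝ≥0∞ :=
  ∑' x : s, w x.1

/-- Average `A_s(f)` of `f` over `s`. -/
noncomputable def avg {τ : ℕ → ℕ} (w f : XPt τ → ℝ≥0∞) (s : Set (XPt τ)) : ℝ≥0∞ :=
  (∑' x : s, f x.1 * w x.1) / mass w s

/-- The centered Hardy–Littlewood maximal operator of `X_τ` (the three balls
centered at `x` are `{x}`, `cball τ x` and the whole space). -/
noncomputable def Mc {τ : ℕ → ℕ} (w f : XPt τ → ℝ≥0∞) (x : XPt τ) : ℝ≥0∞ :=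
  avg w f {x} ⊔ avg w f (cball τ x) ⊔ avg w f Set.univ

/-- The non-centered Hardy–Littlewood maximal operator of `X_τ`. -/
noncomputable def Mnc {τ : ℕ → ℕ} (w f : XPt τ → ℝ≥0∞) (x : XPt τ) : ℝ≥0∞ :=
  ⨆ (B : Set (XPt τ)) (_ : B ∈ balls τ) (_ : x ∈ B), avg w f B

/-- `‖f‖_p^p = ∑_x f(x)^p μ({x})`. -/
noncomputable def lpp {τ : ℕ → ℕ} (w : XPt τ → ℝ≥0∞) (p : ℝ) (f : XPt τ → ℝ≥0∞) : ℝ≥0∞ :=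
  ∑' x, f x ^ p * w x

/-- `T` is of strong type `(p,p)` (stated on the level of `p`-th powers). -/
def strongT {τ : ℕ → ℕ} (w : XPt τ → ℝ≥0∞)
    (T : (XPt τ → ℝ≥0∞) → XPt τ → ℝ≥0∞) (p : ℝ) : Prop :=
  ∃ C : ℝ≥0∞, C ≠ ∞ ∧ ∀ f, lpp w p (T f) ≤ C * lpp w p f

/-- `T` is of weak type `(p,p)` (stated on the level of `p`-th powers). -/
def weakT {τ : ℕ → ℕ} (w : XPt τ → ℝ≥0∞)
    (T : (XPt τ → ℝ≥0∞) → XPt τ → ℝ≥0∞) (p : ℝ) : Prop :=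
  ∃ C : ℝ≥0∞, C ≠ ∞ ∧ ∀ f (l : ℝ≥0∞), l ^ p * mass w {x | l < T f x} ≤ C * lpp w p f

/-- `‖g‖_{p,∞}^p`. -/
noncomputable def wnormP {τ : ℕ → ℕ} (w : XPt τ → ℝ≥0∞) (p : ℝ) (g : XPt τ → ℝ≥0∞) : ℝ≥0∞ :=
  ⨆ l : ℝ≥0∞, l ^ p * mass w {x | l < g x}

/-- The Dirac function `δ_{x_n}`. -/
noncomputable def dirac (τ : ℕ → ℕ) (n : ℕ) : XPt τ → ℝ≥0∞ :=
  fun x => if x = root τ n then 1 else 0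

end FirstGen

theorem tsum_subtype_pair {α : Type*} (g : α → ℝ≥0∞) {a b : α} (h : a ≠ b) :
    ∑' x : ({a, b} : Set α), g x = g a + g b := by
  rw [show ({a, b} : Set α) = (({a, b} : Finset α) : Set α) by simp, Finset.tsum_subtype',
    Finset.sum_pair h]

theorem natCast_div_rpow_eq_ofReal (a b : ℕ) (hb : b ≠ 0) {p : ℝ} (hp : 0 ≤ p) :
    (a : ℝ≥0∞) / (b : ℝ≥0∞) ^ p = ENNReal.ofReal ((a : ℝ) / (b : ℝ) ^ p) := by
  have hb' : (0 : ℝ) < b := by exact_mod_cast Nat.pos_of_ne_zero hb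
  rw [ENNReal.ofReal_div_of_pos (by positivity), ← ENNReal.ofReal_rpow_of_nonneg hb'.le hp,
    ENNReal.ofReal_natCast, ENNReal.ofReal_natCast]

theorem sub_le_mul_floor_div {x b : ℝ} (hb : 0 < b) : x - b ≤ b * ⌊x / b⌋₊ := by
  have h := mul_le_mul_of_nonneg_left (Nat.sub_one_lt_floor (x / b)).le hb.le
  rwa [mul_sub, mul_div_cancel₀ x hb.ne', mul_one] at h

section Growth

variable {p0 p : ℝ} {τ : ℕ → ℕ}

theorem rpow_sub_div_le_ratio (hp : 1 ≤ p)
    (hτ : ∀ n : ℕ, τ n = ⌊((n : ℝ) + 2) ^ p0 / ((n : ℝ) + 1)⌋₊) (n : ℕ) :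
    (((n : ℝ) + 2) ^ (p0 - p) - 1) / 2 ^ p
      ≤ (((n : ℝ) + 1) * (τ n : ℝ)) / (2 * ((n : ℝ) + 2)) ^ p := by
  have hn2 : (0 : ℝ) < (n : ℝ) + 2 := by positivity
  have hτ_low : ((n : ℝ) + 2) ^ p0 - ((n : ℝ) + 1) ≤ ((n : ℝ) + 1) * (τ n : ℝ) := by
    rw [hτ n]
    exact sub_le_mul_floor_div (by positivity)
  have hsplit : ((n : ℝ) + 2) ^ p0 = ((n : ℝ) + 2) ^ (p0 - p) * ((n : ℝ) + 2) ^ p := by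
    rw [← Real.rpow_add hn2, sub_add_cancel]
  have hn1_le : (n : ℝ) + 1 ≤ ((n : ℝ) + 2) ^ p :=
    calc (n : ℝ) + 1 ≤ ((n : ℝ) + 2) ^ (1 : ℝ) := by rw [Real.rpow_one]; linarith
      _ ≤ ((n : ℝ) + 2) ^ p := Real.rpow_le_rpow_of_exponent_le (by linarith) hp
  rw [Real.mul_rpow zero_le_two hn2.le, mul_comm ((2 : ℝ) ^ p), ← div_div,
    div_le_div_iff_of_pos_right (by positivity), le_div_iff₀ (by positivity)]
  calc (((n : ℝ) + 2) ^ (p0 - p) - 1) * ((n : ℝ) + 2) ^ p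
      = ((n : ℝ) + 2) ^ p0 - ((n : ℝ) + 2) ^ p := by rw [hsplit]; ring
    _ ≤ ((n : ℝ) + 1) * (τ n : ℝ) := by linarith

theorem tendsto_ratio_atTop (hp : 1 ≤ p) (hpp0 : p < p0)
    (hτ : ∀ n : ℕ, τ n = ⌊((n : ℝ) + 2) ^ p0 / ((n : ℝ) + 1)⌋₊) :
    Tendsto (fun n : ℕ => (((n : ℝ) + 1) * (τ n : ℝ)) / (2 * ((n : ℝ) + 2)) ^ p)
      atTop atTop := by
  have hgrow : Tendsto (fun n : ℕ => ((n : ℝ) + 2) ^ (p0 - p)) atTop atTop :=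
    (tendsto_rpow_atTop (by linarith)).comp
      (tendsto_atTop_add_const_right _ 2 tendsto_natCast_atTop_atTop)
  refine tendsto_atTop_mono (rpow_sub_div_le_ratio hp hτ) ?_
  exact (tendsto_atTop_add_const_right _ (-1) hgrow).atTop_div_const (by positivity)

end Growth

namespace FirstGen

section General

variable {τ : ℕ → ℕ} (w : XPt τ → ℝ≥0∞)

theorem root_ne_leaf (n : ℕ) (i : Fin (τ n)) : root τ n ≠ leaf τ n i := by
  simp [root, leaf]

theorem leaf_injective (n : ℕ) : Function.Injective (leaf τ n) := by
  intro i j h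
  simpa [leaf] using h

theorem mass_mono {s t : Set (XPt τ)} (h : s ⊆ t) : mass w s ≤ mass w t :=
  ENNReal.tsum_mono_subtype w h

theorem mass_range_leaf (n : ℕ) : mass w (range (leaf τ n)) = ∑ i, w (leaf τ n i) := by
  rw [mass, tsum_range _ (leaf_injective n), tsum_fintype]

theorem mul_mass_le_wnormP (p : ℝ) (g : XPt τ → ℝ≥0∞) {l : ℝ≥0∞} {s : Set (XPt τ)}
    (hs : s ⊆ {x | l < g x}) : l ^ p * mass w s ≤ wnormP w p g :=
  (mul_le_mul_right (mass_mono w hs) _).trans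
    (le_iSup (fun l' : ℝ≥0∞ => l' ^ p * mass w {x | l' < g x}) l)

theorem weakT_iff_wnormP_le (T : (XPt τ → ℝ≥0∞) → XPt τ → ℝ≥0∞) (p : ℝ) :
    weakT w T p ↔ ∃ C : ℝ≥0∞, C ≠ ∞ ∧ ∀ f, wnormP w p (T f) ≤ C * lpp w p f := by
  simp only [weakT, wnormP, iSup_le_iff]

theorem avg_cball_le_Mc (f : XPt τ → ℝ≥0∞) (x : XPt τ) : avg w f (cball τ x) ≤ Mc w f x :=
  le_sup_of_le_left le_sup_right

theorem lpp_dirac {p : ℝ} (hp : 0 < p) (n : ℕ) : lpp w p (dirac τ n) = w (root τ n) := by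
  rw [lpp, tsum_eq_single (root τ n) fun x hx => by simp [dirac, hx, ENNReal.zero_rpow_of_pos hp]]
  simp [dirac]

theorem avg_dirac_pairB (n : ℕ) (i : Fin (τ n)) :
    avg w (dirac τ n) (pairB τ n i) = w (root τ n) / (w (root τ n) + w (leaf τ n i)) := by
  rw [avg, mass, pairB, tsum_subtype_pair _ (root_ne_leaf n i),
    tsum_subtype_pair (fun x => dirac τ n x * w x) (root_ne_leaf n i)]
  simp [dirac, (root_ne_leaf n i).symm]

end General

section Weight

variable {τ : ℕ → ℕ} {d : ℕ → ℝ≥0∞} {F : (n : ℕ) → Fin (τ n) → ℝ≥0∞} {n : ℕ}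

@[simp]
theorem weight_root : weight τ d F (root τ n) = d n := rfl

@[simp]
theorem weight_leaf (i : Fin (τ n)) : weight τ d F (leaf τ n i) = d n * F n i := rfl

theorem inv_le_Mc_dirac_leaf (hd₀ : d n ≠ 0) (hd : d n ≠ ∞) (hF : ∀ i, F n i = (n : ℝ≥0∞) + 1)
    (i : Fin (τ n)) : ((n : ℝ≥0∞) + 2)⁻¹ ≤ Mc (weight τ d F) (dirac τ n) (leaf τ n i) := by
  refine le_of_eq_of_le ?_ (avg_cball_le_Mc _ _ (leaf τ n i))
  have hpair : d n + d n * F n i = d n * ((n : ℝ≥0∞) + 2) := by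
    rw [hF]
    ring
  rw [show cball τ (leaf τ n i) = pairB τ n i from rfl, avg_dirac_pairB, weight_root,
    weight_leaf, hpair, ENNReal.div_eq_inv_mul, ENNReal.mul_inv (.inl hd₀) (.inl hd),
    mul_right_comm, ENNReal.inv_mul_cancel hd₀ hd, one_mul]

theorem mass_range_leaf_weight (hF : ∀ i, F n i = (n : ℝ≥0∞) + 1) :
    mass (weight τ d F) (range (leaf τ n)) = (τ n : ℝ≥0∞) * (d n * ((n : ℝ≥0∞) + 1)) := by
  simp [mass_range_leaf, hF]

theorem ratio_mul_lpp_dirac_le_wnormP {p : ℝ} (hp : 0 < p) (hd₀ : d n ≠ 0) (hd : d n ≠ ∞)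
    (hF : ∀ i, F n i = (n : ℝ≥0∞) + 1) :
    (((n : ℝ≥0∞) + 1) * (τ n : ℝ≥0∞)) / ((2 * ((n : ℝ≥0∞) + 2)) ^ p)
        * lpp (weight τ d F) p (dirac τ n)
      ≤ wnormP (weight τ d F) p (Mc (weight τ d F) (dirac τ n)) := by
  set l : ℝ≥0∞ := (2 * ((n : ℝ≥0∞) + 2))⁻¹
  have hl : l < ((n : ℝ≥0∞) + 2)⁻¹ := by
    refine ENNReal.inv_lt_inv.mpr ?_
    rw [two_mul]
    exact ENNReal.lt_add_right (by simp) (by simp)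
  have hleaves : range (leaf τ n) ⊆ {x | l < Mc (weight τ d F) (dirac τ n) x} := by
    rintro _ ⟨i, rfl⟩
    exact hl.trans_le (inv_le_Mc_dirac_leaf hd₀ hd hF i)
  refine le_of_eq_of_le ?_ (mul_mass_le_wnormP _ p _ hleaves)
  rw [lpp_dirac _ hp, weight_root, mass_range_leaf_weight hF, ENNReal.inv_rpow, div_eq_mul_inv]
  ring

end Weight

end FirstGen

open FirstGen

theorem Xhat_cen_not_weak_general (p0 p : ℝ) (hp : 1 ≤ p) (hpp0 : p < p0)
    (τ : ℕ → ℕ) (hτ : ∀ n : ℕ, τ n = ⌊((n : ℝ) + 2) ^ p0 / ((n : ℝ) + 1)⌋₊)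
    (d : ℕ → ℝ≥0∞) (hd : ∀ n, 0 < d n ∧ d n ≠ ∞)
    (F : (n : ℕ) → Fin (τ n) → ℝ≥0∞) (hF : ∀ n i, F n i = (n : ℝ≥0∞) + 1) :
    (Tendsto (fun n : ℕ => (((n : ℝ) + 1) * (τ n : ℝ)) / (2 * ((n : ℝ) + 2)) ^ p)
      atTop atTop) ∧
    (∀ n : ℕ,
      (((n : ℝ≥0∞) + 1) * (τ n : ℝ≥0∞)) / ((2 * ((n : ℝ≥0∞) + 2)) ^ p)
          * lpp (weight τ d F) p (dirac τ n)
        ≤ wnormP (weight τ d F) p (Mc (weight τ d F) (dirac τ n))) ∧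
    ¬ weakT (weight τ d F) (Mc (weight τ d F)) p := by
  have hp_pos : 0 < p := by linarith
  have hratio := tendsto_ratio_atTop hp hpp0 hτ
  have hlower := fun n => ratio_mul_lpp_dirac_le_wnormP hp_pos (hd n).1.ne' (hd n).2 (hF n)
  refine ⟨hratio, hlower, ?_⟩
  rw [weakT_iff_wnormP_le]
  rintro ⟨C, hC, hweak⟩
  obtain ⟨n, hn⟩ := (hratio.eventually_gt_atTop C.toReal).exists
  have hbound := (hlower n).trans (hweak (dirac τ n))
  rw [lpp_dirac _ hp_pos, weight_root,
    ENNReal.mul_le_mul_iff_left (hd n).1.ne' (hd n).2] at hbound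
  have hcast := natCast_div_rpow_eq_ofReal ((n + 1) * τ n) (2 * (n + 2)) (by positivity)
    hp_pos.le
  push_cast at hcast
  rw [hcast, ENNReal.ofReal_le_iff_le_toReal hC] at hbound
  exact hn.not_ge hbound

/-- in the first generation space `X̂_{p₀}` (`p₀ > 1`; branch `n` here
is the paper's branch `n+1`, with `τ n = ⌊(n+2)^{p₀}/(n+1)⌋` leaves, each of weight
`(n+1) d n`, masses of branches halving and `d 0 = 1`), for every `1 ≤ p < p₀` the
centered maximal operator is not of weak type `(p,p)`: for `f_n = δ_{x_n}` one has
`‖M^c f_n‖_{p,∞}^p ≥ ((n+1) τ n / (2(n+2))^p) ‖f_n‖_p^p` and this ratio tends to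
infinity. -/
theorem Xhat_cen_not_weak (p0 p : ℝ) (hp0 : 1 < p0) (hp : 1 ≤ p) (hpp0 : p < p0)
    (τ : ℕ → ℕ) (hτ : ∀ n : ℕ, τ n = ⌊((n : ℝ) + 2) ^ p0 / ((n : ℝ) + 1)⌋₊)
    (d : ℕ → ℝ≥0∞) (hd : ∀ n, 0 < d n ∧ d n ≠ ∞) (hd1 : d 0 = 1)
    (F : (n : ℕ) → Fin (τ n) → ℝ≥0∞) (hF : ∀ n i, F n i = (n : ℝ≥0∞) + 1)
    (hhalf : ∀ n, mass (weight τ d F) (branch τ (n + 1))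
      = mass (weight τ d F) (branch τ n) / 2) :
    (Tendsto (fun n : ℕ => (((n : ℝ) + 1) * (τ n : ℝ)) / (2 * ((n : ℝ) + 2)) ^ p)
      atTop atTop) ∧
    (∀ n : ℕ,
      (((n : ℝ≥0∞) + 1) * (τ n : ℝ≥0∞)) / ((2 * ((n : ℝ≥0∞) + 2)) ^ p)
          * lpp (weight τ d F) p (dirac τ n)
        ≤ wnormP (weight τ d F) p (Mc (weight τ d F) (dirac τ n))) ∧
    ¬ weakT (weight τ d F) (Mc (weight τ d F)) p :=
  Xhat_cen_not_weak_general p0 p hp hpp0 τ hτ d hd F hF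
end

section
/- Let Ŷ_{p0} be the second generation space (any τ, F(n,i) arbitrary positive). Then the centered maximal operator M^c is of strong type (1,1) with constant 5: ‖M^c f‖_1 ≤ 5 ‖f‖_1 for all f ∈ ℓ^1(Y_τ, μ). -/
open scoped ENNReal Classical
open Filter Set

/-- The point set of a second generation space: roots `y_n`, middle points
`y_{n,i}` and top points `y'_{n,i}` (`i` among `τ n` per branch). -/
abbrev YPt (τ : ℕ → ℕ) := ℕ ⊕ ((Σ n : ℕ, Fin (τ n)) ⊕ (Σ n : ℕ, Fin (τ n)))

namespace SecondGen

/-- The root `y_n`. -/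
def root (τ : ℕ → ℕ) (n : ℕ) : YPt τ := Sum.inl n

/-- The middle point `y_{n,i}`. -/
def mid (τ : ℕ → ℕ) (n : ℕ) (i : Fin (τ n)) : YPt τ := Sum.inr (Sum.inl ⟨n, i⟩)

/-- The top point `y'_{n,i}`. -/
def top (τ : ℕ → ℕ) (n : ℕ) (i : Fin (τ n)) : YPt τ := Sum.inr (Sum.inr ⟨n, i⟩)

/-- The triple `{y_n} ∪ T_{n,i} = {y_n, y_{n,i}, y'_{n,i}}`. -/
def triple (τ : ℕ → ℕ) (n : ℕ) (i : Fin (τ n)) : Set (YPt τ) :=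
  {root τ n, mid τ n i, top τ n i}

/-- The pair `T_{n,i} = {y_{n,i}, y'_{n,i}}`. -/
def pairB (τ : ℕ → ℕ) (n : ℕ) (i : Fin (τ n)) : Set (YPt τ) :=
  {mid τ n i, top τ n i}

/-- The lower part of a branch, `T_n \ T_n' = {y_n, y_{n,1}, …, y_{n,τ_n}}`. -/
def low (τ : ℕ → ℕ) (n : ℕ) : Set (YPt τ) :=
  {x | x = root τ n ∨ ∃ i, x = mid τ n i}

/-- The full branch `T_n`. -/
def branch (τ : ℕ → ℕ) (n : ℕ) : Set (YPt τ) :=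
  {x | x = root τ n ∨ (∃ i, x = mid τ n i) ∨ ∃ i, x = top τ n i}

/-- The collection of all open balls of `Y_τ`. -/
def balls (τ : ℕ → ℕ) : Set (Set (YPt τ)) :=
  {B | (∃ x, B = {x}) ∨ (∃ n i, B = triple τ n i) ∨ (∃ n i, B = pairB τ n i) ∨
       (∃ n, B = low τ n) ∨ B = Set.univ}

/-- The ball `B(y, 3/2)` centered at `y`. -/
def cball (τ : ℕ → ℕ) : YPt τ → Set (YPt τ)
  | Sum.inl n => low τ n
  | Sum.inr (Sum.inl ⟨n, i⟩) => triple τ n i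
  | Sum.inr (Sum.inr ⟨n, i⟩) => pairB τ n i

/-- The weights: `μ({y_n}) = d n`, `μ({y_{n,i}}) = d n / τ n`,
`μ({y'_{n,i}}) = d n * F n i`. -/
noncomputable def weight (τ : ℕ → ℕ) (d : ℕ → ℝ≥0∞)
    (F : (n : ℕ) → Fin (τ n) → ℝ≥0∞) : YPt τ → ℝ≥0∞
  | Sum.inl n => d n
  | Sum.inr (Sum.inl ⟨n, _⟩) => d n / (τ n : ℝ≥0∞)
  | Sum.inr (Sum.inr ⟨n, i⟩) => d n * F n i

/-- Measure of a set. -/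
noncomputable def mass {τ : ℕ → ℕ} (w : YPt τ → ℝ≥0∞) (s : Set (YPt τ)) : ℝ≥0∞ :=
  ∑' x : s, w x.1

/-- Average of `f` over `s`. -/
noncomputable def avg {τ : ℕ → ℕ} (w f : YPt τ → ℝ≥0∞) (s : Set (YPt τ)) : ℝ≥0∞ :=
  (∑' x : s, f x.1 * w x.1) / mass w s

/-- The centered Hardy–Littlewood maximal operator of `Y_τ`. -/
noncomputable def Mc {τ : ℕ → ℕ} (w f : YPt τ → ℝ≥0∞) (x : YPt τ) : ℝ≥0∞ :=
  avg w f {x} ⊔ avg w f (cball τ x) ⊔ avg w f Set.univ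

/-- The non-centered Hardy–Littlewood maximal operator of `Y_τ`. -/
noncomputable def Mnc {τ : ℕ → ℕ} (w f : YPt τ → ℝ≥0∞) (x : YPt τ) : ℝ≥0∞ :=
  ⨆ (B : Set (YPt τ)) (_ : B ∈ balls τ) (_ : x ∈ B), avg w f B

/-- `‖f‖_p^p`. -/
noncomputable def lpp {τ : ℕ → ℕ} (w : YPt τ → ℝ≥0∞) (p : ℝ) (f : YPt τ → ℝ≥0∞) : ℝ≥0∞ :=
  ∑' x, f x ^ p * w x

/-- Strong type `(p,p)` (on the level of `p`-th powers). -/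
def strongT {τ : ℕ → ℕ} (w : YPt τ → ℝ≥0∞)
    (T : (YPt τ → ℝ≥0∞) → YPt τ → ℝ≥0∞) (p : ℝ) : Prop :=
  ∃ C : ℝ≥0∞, C ≠ ∞ ∧ ∀ f, lpp w p (T f) ≤ C * lpp w p f

/-- Weak type `(p,p)` (on the level of `p`-th powers). -/
def weakT {τ : ℕ → ℕ} (w : YPt τ → ℝ≥0∞)
    (T : (YPt τ → ℝ≥0∞) → YPt τ → ℝ≥0∞) (p : ℝ) : Prop :=
  ∃ C : ℝ≥0∞, C ≠ ∞ ∧ ∀ f (l : ℝ≥0∞), l ^ p * mass w {x | l < T f x} ≤ C * lpp w p f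

/-- `‖g‖_{p,∞}^p`. -/
noncomputable def wnormP {τ : ℕ → ℕ} (w : YPt τ → ℝ≥0∞) (p : ℝ) (g : YPt τ → ℝ≥0∞) : ℝ≥0∞ :=
  ⨆ l : ℝ≥0∞, l ^ p * mass w {x | l < g x}

/-- The Dirac function `δ_{y_n}`. -/
noncomputable def dirac (τ : ℕ → ℕ) (n : ℕ) : YPt τ → ℝ≥0∞ :=
  fun x => if x = root τ n then 1 else 0

end SecondGen

open SecondGen

/-!
Bound `M^c f` pointwise by the sum of its three averages. The averages over singletons and
over the whole space each contribute at most `‖f‖₁`. Each average over `B(y, 3/2)`, weighted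
by `μ({y})`, is at most the integral of `|f|` over that ball. Apart from the triples
`{y_n} ∪ T_{n,i}`, these balls are `T_n \ T_n'` and `T_{n,i}`, which cover every point at most
twice; the `τ_n` triples around `y_n` carry weight `μ({y_{n,i}}) = μ({y_n}) / τ_n` each, so
together they cover `y_n` only once. Hence the middle term is at most `3 ‖f‖₁`.
-/

namespace SecondGen

lemma tsum_insert_le {α : Type*} (g : α → ℝ≥0∞) (a : α) (s : Set α) :
    ∑' x : ↑(insert a s), g x ≤ g a + ∑' x : s, g x := by
  rw [insert_eq, ← tsum_singleton a g]
  exact ENNReal.tsum_union_le g {a} s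

variable {τ : ℕ → ℕ}

lemma tsum_YPt_eq (h : YPt τ → ℝ≥0∞) :
    ∑' x, h x = ∑' n, h (root τ n) +
      (∑' n, ∑' i, h (mid τ n i) + ∑' n, ∑' i, h (top τ n i)) := by
  rw [ENNReal.summable.tsum_sum ENNReal.summable, ENNReal.summable.tsum_sum ENNReal.summable,
    ENNReal.tsum_sigma', ENNReal.tsum_sigma']
  rfl

lemma mid_injective (n : ℕ) : Function.Injective (mid τ n) := by
  intro i j h
  simpa [mid] using h

lemma low_eq_insert_range (n : ℕ) : low τ n = insert (root τ n) (range (mid τ n)) := by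
  ext x
  simp [low, eq_comm]

lemma lpp_one (w f : YPt τ → ℝ≥0∞) : lpp w 1 f = ∑' x, f x * w x := by
  simp only [lpp, ENNReal.rpow_one]

section Averages

variable (w f : YPt τ → ℝ≥0∞)

lemma avg_mul_mass_le (s : Set (YPt τ)) : avg w f s * mass w s ≤ ∑' y : s, f y * w y := by
  rw [avg, mul_comm]
  exact ENNReal.mul_div_le

lemma avg_mul_le_of_mem {s : Set (YPt τ)} {x : YPt τ} (hx : x ∈ s) :
    avg w f s * w x ≤ ∑' y : s, f y * w y :=
  (mul_le_mul_right (ENNReal.le_tsum (⟨x, hx⟩ : s)) _).trans (avg_mul_mass_le w f s)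

lemma Mc_mul_le (x : YPt τ) :
    Mc w f x * w x ≤ avg w f {x} * w x + avg w f (cball τ x) * w x + avg w f univ * w x := by
  rw [Mc, ← add_mul, ← add_mul]
  gcongr
  exact sup_le (sup_le (le_self_add.trans le_self_add) (le_add_self.trans le_self_add))
    le_add_self

lemma tsum_avg_singleton_mul_le : ∑' x, avg w f {x} * w x ≤ ∑' x, f x * w x :=
  ENNReal.tsum_le_tsum fun x =>
    (avg_mul_le_of_mem w f (mem_singleton x)).trans_eq (tsum_singleton x fun y => f y * w y)

lemma tsum_avg_univ_mul_le : ∑' x, avg w f univ * w x ≤ ∑' x, f x * w x :=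
  calc ∑' x, avg w f univ * w x = avg w f univ * mass w univ := by
        rw [ENNReal.tsum_mul_left, mass, tsum_univ]
    _ ≤ ∑' y : (univ : Set (YPt τ)), f y * w y := avg_mul_mass_le w f univ
    _ = ∑' x, f x * w x := tsum_univ fun y => f y * w y

lemma avg_low_mul_le (n : ℕ) :
    avg w f (low τ n) * w (root τ n) ≤
      f (root τ n) * w (root τ n) + ∑' i, f (mid τ n i) * w (mid τ n i) := by
  refine (avg_mul_le_of_mem w f (Or.inl rfl)).trans ?_
  rw [low_eq_insert_range]
  refine (tsum_insert_le (fun y => f y * w y) _ _).trans_eq ?_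
  rw [tsum_range (fun y => f y * w y) (mid_injective n)]

lemma avg_pairB_mul_le (n : ℕ) (i : Fin (τ n)) :
    avg w f (pairB τ n i) * w (top τ n i) ≤
      f (mid τ n i) * w (mid τ n i) + f (top τ n i) * w (top τ n i) := by
  refine (avg_mul_le_of_mem w f (by simp [pairB])).trans ?_
  refine (tsum_insert_le (fun y => f y * w y) _ _).trans_eq ?_
  rw [tsum_singleton (top τ n i) fun y => f y * w y]

lemma avg_triple_mul_le (n : ℕ) (i : Fin (τ n)) :
    avg w f (triple τ n i) * w (root τ n) ≤ f (root τ n) * w (root τ n) +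
      (f (mid τ n i) * w (mid τ n i) + f (top τ n i) * w (top τ n i)) := by
  refine (avg_mul_le_of_mem w f (mem_insert _ _)).trans ?_
  refine (tsum_insert_le (fun y => f y * w y) _ _).trans ?_
  gcongr
  refine (tsum_insert_le (fun y => f y * w y) _ _).trans_eq ?_
  rw [tsum_singleton (top τ n i) fun y => f y * w y]

lemma tsum_avg_triple_mul_le (n : ℕ) :
    ∑' i, avg w f (triple τ n i) * (w (root τ n) / τ n) ≤ f (root τ n) * w (root τ n) +
      ∑' i, (f (mid τ n i) * w (mid τ n i) + f (top τ n i) * w (top τ n i)) := by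
  set a := f (root τ n) * w (root τ n)
  calc ∑' i, avg w f (triple τ n i) * (w (root τ n) / τ n)
      ≤ ∑' i, (a / τ n + (f (mid τ n i) * w (mid τ n i) + f (top τ n i) * w (top τ n i))) := by
        refine ENNReal.tsum_le_tsum fun i => ?_
        have hτ : (1 : ℝ≥0∞) ≤ τ n := by exact_mod_cast i.pos
        rw [← mul_div_assoc]
        refine (ENNReal.div_le_div_right (avg_triple_mul_le w f n i) _).trans ?_
        rw [ENNReal.add_div]
        exact add_le_add le_rfl (ENNReal.div_le_of_le_mul (le_mul_of_one_le_right zero_le hτ))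
    _ = τ n * (a / τ n) +
          ∑' i, (f (mid τ n i) * w (mid τ n i) + f (top τ n i) * w (top τ n i)) := by
        rw [ENNReal.tsum_add, tsum_fintype, Finset.sum_const, Finset.card_univ, Fintype.card_fin,
          nsmul_eq_mul]
    _ ≤ _ := add_le_add ENNReal.mul_div_le le_rfl

lemma tsum_avg_cball_mul_le (hmid : ∀ n i, w (mid τ n i) = w (root τ n) / τ n) :
    ∑' x, avg w f (cball τ x) * w x ≤ 3 * ∑' x, f x * w x := by
  rw [tsum_YPt_eq fun x => avg w f (cball τ x) * w x, tsum_YPt_eq fun x => f x * w x]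
  set R := ∑' n, f (root τ n) * w (root τ n)
  set M := ∑' n, ∑' i, f (mid τ n i) * w (mid τ n i)
  set T := ∑' n, ∑' i, f (top τ n i) * w (top τ n i)
  have hlow : ∑' n, avg w f (low τ n) * w (root τ n) ≤ R + M :=
    (ENNReal.tsum_le_tsum (avg_low_mul_le w f)).trans_eq ENNReal.tsum_add
  have htriple : ∑' n, ∑' i, avg w f (triple τ n i) * w (mid τ n i) ≤ R + (M + T) := by
    simp_rw [hmid]
    refine (ENNReal.tsum_le_tsum (tsum_avg_triple_mul_le w f)).trans_eq ?_
    rw [ENNReal.tsum_add]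
    simp_rw [ENNReal.tsum_add]
    rfl
  have hpair : ∑' n, ∑' i, avg w f (pairB τ n i) * w (top τ n i) ≤ M + T := by
    refine (ENNReal.tsum_le_tsum fun n =>
      ENNReal.tsum_le_tsum (avg_pairB_mul_le w f n)).trans_eq ?_
    simp_rw [ENNReal.tsum_add]
    rfl
  calc _ ≤ R + M + (R + (M + T) + (M + T)) := add_le_add hlow (add_le_add htriple hpair)
    _ ≤ R + (M + T) + (R + (M + T) + (R + (M + T))) :=
        add_le_add (add_le_add le_rfl le_self_add) (add_le_add le_rfl le_add_self)
    _ = 3 * (R + (M + T)) := by ring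

end Averages

end SecondGen

theorem Yhat_cen_strong11_general (τ : ℕ → ℕ) (d : ℕ → ℝ≥0∞) (F : (n : ℕ) → Fin (τ n) → ℝ≥0∞) :
    ∀ f : YPt τ → ℝ≥0∞,
      lpp (weight τ d F) 1 (Mc (weight τ d F) f) ≤ 5 * lpp (weight τ d F) 1 f := by
  intro f
  set w := weight τ d F
  rw [lpp_one, lpp_one]
  calc ∑' x, Mc w f x * w x
      ≤ ∑' x, (avg w f {x} * w x + avg w f (cball τ x) * w x + avg w f univ * w x) :=
        ENNReal.tsum_le_tsum (Mc_mul_le w f)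
    _ = ∑' x, avg w f {x} * w x + ∑' x, avg w f (cball τ x) * w x +
          ∑' x, avg w f univ * w x := by
        rw [ENNReal.tsum_add, ENNReal.tsum_add]
    _ ≤ ∑' x, f x * w x + 3 * ∑' x, f x * w x + ∑' x, f x * w x :=
        add_le_add (add_le_add (tsum_avg_singleton_mul_le w f)
          (tsum_avg_cball_mul_le w f fun _ _ => rfl)) (tsum_avg_univ_mul_le w f)
    _ = 5 * ∑' x, f x * w x := by ring

/-- in any second generation space (any `τ ≥ 1`, any positive finite
`F`, weights `μ({y_n}) = d n`, `μ({y_{n,i}}) = d n / τ n`, `μ({y'_{n,i}}) = d n F n i`,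
branch masses halving, `d 0 = 1`), the centered maximal operator is of strong type
`(1,1)` with constant `5`: `‖M^c f‖₁ ≤ 5 ‖f‖₁`. -/
theorem Yhat_cen_strong11 (τ : ℕ → ℕ) (hτ : ∀ n, 1 ≤ τ n)
    (d : ℕ → ℝ≥0∞) (hd : ∀ n, 0 < d n ∧ d n ≠ ∞) (hd1 : d 0 = 1)
    (F : (n : ℕ) → Fin (τ n) → ℝ≥0∞) (hF : ∀ n i, 0 < F n i ∧ F n i ≠ ∞)
    (hhalf : ∀ n, mass (weight τ d F) (branch τ (n + 1))
      = mass (weight τ d F) (branch τ n) / 2) :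
    ∀ f : YPt τ → ℝ≥0∞,
      lpp (weight τ d F) 1 (Mc (weight τ d F) f) ≤ 5 * lpp (weight τ d F) 1 f :=
  Yhat_cen_strong11_general τ d F
end

section
/- Let p0 ∈ (1,∞) and Ŷ_{p0} be the second generation space with τ_n = ⌊(n+1)^{p0}/n⌋ and F(n,i) = n. Then the non-centered operator M is not of weak type (p,p) for any 1 ≤ p < p0: for f_n = δ_{y_n}, ‖Mf_n‖_{p,∞}^p/‖f_n‖_p^p ≥ n τ_n d_n/((2(n+2))^p d_n) → ∞. -/
open scoped ENNReal Classical
open Filter Set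

open SecondGen

section AuxProof

open SecondGen

private lemma aux_tendsto (p0 p : ℝ) (hp0 : 1 < p0) (hp : 1 ≤ p) (hpp0 : p < p0)
    (τ : ℕ → ℕ) (hτ : ∀ n : ℕ, τ n = ⌊((n : ℝ) + 2) ^ p0 / ((n : ℝ) + 1)⌋₊) :
    Tendsto (fun n : ℕ => (((n : ℝ) + 1) * (τ n : ℝ)) / (2 * ((n : ℝ) + 3)) ^ p)
      atTop atTop := by
  have hbd : ∀ n : ℕ, (((n : ℝ) + 2) ^ (p0 - p) - 1) / 3 ^ p
      ≤ (((n : ℝ) + 1) * (τ n : ℝ)) / (2 * ((n : ℝ) + 3)) ^ p := by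
    intro n
    have hn0 : (0:ℝ) ≤ (n:ℝ) := Nat.cast_nonneg n
    have hx2 : (1:ℝ) ≤ (n:ℝ) + 2 := by linarith
    have hx2p : (0:ℝ) < (n:ℝ) + 2 := by linarith
    have hn1 : (0:ℝ) < (n:ℝ) + 1 := by linarith
    have hfl : ((n:ℝ)+2) ^ p0 / ((n:ℝ)+1) - 1 ≤ (τ n : ℝ) := by
      rw [hτ n]; exact (Nat.sub_one_lt_floor _).le
    have hnum : ((n:ℝ)+2) ^ p0 - ((n:ℝ)+2) ≤ ((n:ℝ)+1) * (τ n : ℝ) := by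
      have h := mul_le_mul_of_nonneg_left hfl hn1.le
      rw [mul_sub, mul_div_cancel₀ _ hn1.ne'] at h
      linarith
    have hden : (2 * ((n:ℝ)+3)) ^ p ≤ 3 ^ p * ((n:ℝ)+2) ^ p := by
      rw [← Real.mul_rpow (by norm_num) hx2p.le]
      exact Real.rpow_le_rpow (by linarith) (by linarith) (by linarith)
    have hdpos : (0:ℝ) < (2 * ((n:ℝ)+3)) ^ p := Real.rpow_pos_of_pos (by linarith) p
    have hppos : (0:ℝ) < ((n:ℝ)+2) ^ p := Real.rpow_pos_of_pos hx2p p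
    have h3p : (0:ℝ) < (3:ℝ) ^ p := Real.rpow_pos_of_pos (by norm_num) p
    have e1 : ((n:ℝ)+2) ^ p0 = ((n:ℝ)+2) ^ (p0 - p) * ((n:ℝ)+2) ^ p := by
      rw [← Real.rpow_add hx2p]; ring_nf
    have hp2 : ((n:ℝ)+2) ≤ ((n:ℝ)+2) ^ p := by
      nth_rewrite 1 [← Real.rpow_one ((n:ℝ)+2)]
      exact Real.rpow_le_rpow_of_exponent_le hx2 hp
    have key : (((n : ℝ) + 2) ^ (p0 - p) - 1) / 3 ^ p
        ≤ (((n:ℝ)+2) ^ p0 - ((n:ℝ)+2)) / (3 ^ p * ((n:ℝ)+2) ^ p) := by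
      rw [div_le_div_iff₀ h3p (by positivity), e1]
      nlinarith [mul_nonneg h3p.le (sub_nonneg.2 hp2)]
    refine le_trans key ?_
    exact div_le_div₀ (by positivity) hnum hdpos hden
  have h0 : Tendsto (fun n : ℕ => (((n:ℝ)+2) ^ (p0 - p) - 1) / 3 ^ p) atTop atTop := by
    apply Tendsto.atTop_div_const (Real.rpow_pos_of_pos (by norm_num) p)
    have h1 : Tendsto (fun n : ℕ => ((n:ℝ)+2) ^ (p0 - p)) atTop atTop :=
      (tendsto_rpow_atTop (by linarith)).comp
        (tendsto_atTop_add_const_right atTop 2 tendsto_natCast_atTop_atTop)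
    simpa [sub_eq_add_neg] using tendsto_atTop_add_const_right atTop (-1 : ℝ) h1
  exact tendsto_atTop_mono hbd h0

end AuxProof

/-- in the second generation space `Ŷ_{p₀}`, `p₀ ∈ (1,∞)` (branch `n`
here is the paper's branch `n+1`, with `τ n = ⌊(n+2)^{p₀}/(n+1)⌋` and top weights
`(n+1) d n`), for every `1 ≤ p < p₀` the non-centered maximal operator is not of
weak type `(p,p)`: for `f_n = δ_{y_n}` one has
`‖M f_n‖_{p,∞}^p ≥ ((n+1) τ n / (2(n+3))^p) ‖f_n‖_p^p`, a ratio tending to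
infinity. -/


theorem Yhat_noncen_not_weak (p0 p : ℝ) (hp0 : 1 < p0) (hp : 1 ≤ p) (hpp0 : p < p0)
    (τ : ℕ → ℕ) (hτ : ∀ n : ℕ, τ n = ⌊((n : ℝ) + 2) ^ p0 / ((n : ℝ) + 1)⌋₊)
    (d : ℕ → ℝ≥0∞) (hd : ∀ n, 0 < d n ∧ d n ≠ ∞) (hd1 : d 0 = 1)
    (F : (n : ℕ) → Fin (τ n) → ℝ≥0∞) (hF : ∀ n i, F n i = (n : ℝ≥0∞) + 1)
    (hhalf : ∀ n, mass (weight τ d F) (branch τ (n + 1))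
      = mass (weight τ d F) (branch τ n) / 2) :
    (Tendsto (fun n : ℕ => (((n : ℝ) + 1) * (τ n : ℝ)) / (2 * ((n : ℝ) + 3)) ^ p)
      atTop atTop) ∧
    (∀ n : ℕ,
      (((n : ℝ≥0∞) + 1) * (τ n : ℝ≥0∞)) / ((2 * ((n : ℝ≥0∞) + 3)) ^ p)
          * lpp (weight τ d F) p (dirac τ n)
        ≤ wnormP (weight τ d F) p (Mnc (weight τ d F) (dirac τ n))) ∧
    ¬ weakT (weight τ d F) (Mnc (weight τ d F)) p := by
  have hτ1 : ∀ n : ℕ, 1 ≤ τ n := by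
    intro n
    have hn0 : (0:ℝ) ≤ (n:ℝ) := Nat.cast_nonneg n
    rw [hτ n]
    apply Nat.le_floor
    rw [Nat.cast_one, le_div_iff₀ (by linarith), one_mul]
    have h2 : ((n:ℝ)+2) ^ (1:ℝ) ≤ ((n:ℝ)+2) ^ p0 :=
      Real.rpow_le_rpow_of_exponent_le (by linarith) hp0.le
    rw [Real.rpow_one] at h2; linarith
  set w := weight τ d F with hw
  have hlpp : ∀ n, lpp w p (dirac τ n) = d n := by
    intro n
    unfold lpp
    rw [tsum_eq_single (root τ n)]
    · simp [dirac, hw, weight, root, ENNReal.one_rpow]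
    · intro b hb
      simp [dirac, hb, ENNReal.zero_rpow_of_pos (by linarith : (0:ℝ) < p)]
  have part1 := aux_tendsto p0 p hp0 hp hpp0 τ hτ
  have part2 : ∀ n : ℕ,
      (((n : ℝ≥0∞) + 1) * (τ n : ℝ≥0∞)) / ((2 * ((n : ℝ≥0∞) + 3)) ^ p)
          * lpp (weight τ d F) p (dirac τ n)
        ≤ wnormP (weight τ d F) p (Mnc (weight τ d F) (dirac τ n)) := by
    intro n
    have hdn0 : d n ≠ 0 := (hd n).1.ne'
    have hdnt : d n ≠ ∞ := (hd n).2
    have hc3 : ((n:ℝ≥0∞) + 3) ≠ 0 := by simp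
    have hc3t : ((n:ℝ≥0∞) + 3) ≠ ∞ := by
      simp [ENNReal.add_eq_top]
    -- average over the triple is at least (n+3)⁻¹
    have havg : ∀ i : Fin (τ n),
        ((n:ℝ≥0∞) + 3)⁻¹ ≤ avg w (dirac τ n) (triple τ n i) := by
      intro i
      have hne1 : root τ n ≠ mid τ n i := by simp [root, mid]
      have hne2 : root τ n ≠ top τ n i := by simp [root, top]
      have hne3 : mid τ n i ≠ top τ n i := by simp [mid, top]
      have hcoe : triple τ n i
          = (({root τ n, mid τ n i, top τ n i} : Finset (YPt τ)) : Set (YPt τ)) := by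
        simp [triple]
      have hmass : mass w (triple τ n i)
          = w (root τ n) + (w (mid τ n i) + w (top τ n i)) := by
        unfold mass
        rw [hcoe, Finset.tsum_subtype' ({root τ n, mid τ n i, top τ n i} : Finset (YPt τ)) w,
          Finset.sum_insert (by simp [hne1, hne2]), Finset.sum_insert (by simp [hne3]),
          Finset.sum_singleton]
      have hmid_le : w (mid τ n i) ≤ d n := by
        show weight τ d F (mid τ n i) ≤ d n
        have : weight τ d F (mid τ n i) = d n / (τ n : ℝ≥0∞) := by simp [weight, mid]
        rw [this]
        calc d n / (τ n : ℝ≥0∞) ≤ d n / 1 :=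
              ENNReal.div_le_div le_rfl (by exact_mod_cast hτ1 n)
          _ = d n := by simp
      have hmassT : mass w (triple τ n i) ≤ d n * ((n:ℝ≥0∞) + 3) := by
        rw [hmass]
        have h1 : w (root τ n) = d n := by simp [hw, weight, root]
        have h3 : w (top τ n i) = d n * ((n:ℝ≥0∞)+1) := by simp [hw, weight, top, hF]
        rw [h1, h3]
        calc d n + (w (mid τ n i) + d n * ((n:ℝ≥0∞)+1))
            ≤ d n + (d n + d n * ((n:ℝ≥0∞)+1)) := by gcongr
          _ = d n * ((n:ℝ≥0∞) + 3) := by ring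
      have hnumge : d n ≤ ∑' x : (triple τ n i), dirac τ n x.1 * w x.1 := by
        have hmem : root τ n ∈ triple τ n i := by simp [triple]
        have h := ENNReal.le_tsum (⟨root τ n, hmem⟩ : triple τ n i)
          (f := fun x : triple τ n i => dirac τ n x.1 * w x.1)
        simpa [dirac, hw, weight, root] using h
      have heq : d n / (d n * ((n:ℝ≥0∞) + 3)) = ((n:ℝ≥0∞) + 3)⁻¹ := by
        rw [div_eq_mul_inv, ENNReal.mul_inv (Or.inl hdn0) (Or.inl hdnt), ← mul_assoc,
          ENNReal.mul_inv_cancel hdn0 hdnt, one_mul]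
      calc ((n:ℝ≥0∞) + 3)⁻¹ = d n / (d n * ((n:ℝ≥0∞) + 3)) := heq.symm
        _ ≤ (∑' x : (triple τ n i), dirac τ n x.1 * w x.1) / mass w (triple τ n i) :=
            ENNReal.div_le_div hnumge hmassT
        _ = avg w (dirac τ n) (triple τ n i) := rfl
    have hMnc : ∀ i : Fin (τ n),
        ((n:ℝ≥0∞) + 3)⁻¹ ≤ Mnc w (dirac τ n) (top τ n i) := by
      intro i
      refine le_trans (havg i) ?_
      unfold Mnc
      refine le_iSup_of_le (triple τ n i) ?_
      refine le_iSup_of_le (Or.inr (Or.inl ⟨n, i, rfl⟩)) ?_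
      exact le_iSup_of_le (by simp [triple] : top τ n i ∈ triple τ n i) le_rfl
    set l : ℝ≥0∞ := (2 * ((n:ℝ≥0∞) + 3))⁻¹ with hldef
    have hl : ∀ i : Fin (τ n), top τ n i ∈ {x | l < Mnc w (dirac τ n) x} := by
      intro i
      refine lt_of_lt_of_le ?_ (hMnc i)
      rw [hldef, ENNReal.inv_lt_inv, two_mul]
      exact ENNReal.lt_add_right hc3t hc3
    have hmassL : (τ n : ℝ≥0∞) * (d n * ((n:ℝ≥0∞) + 1))
        ≤ mass w {x | l < Mnc w (dirac τ n) x} := by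
      unfold mass
      rw [tsum_subtype]
      set s : Finset (YPt τ) := Finset.univ.image (fun i : Fin (τ n) => top τ n i) with hsdef
      have hinj : ∀ a ∈ (Finset.univ : Finset (Fin (τ n))), ∀ b ∈ Finset.univ,
          top τ n a = top τ n b → a = b := by
        intro a _ b _ h
        simpa [top] using h
      have hs' : ∑ x ∈ s, (Set.indicator {x | l < Mnc w (dirac τ n) x} w) x
          = (τ n : ℝ≥0∞) * (d n * ((n:ℝ≥0∞) + 1)) := by
        rw [hsdef, Finset.sum_image hinj]
        have hval : ∀ i ∈ (Finset.univ : Finset (Fin (τ n))),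
            (Set.indicator {x | l < Mnc w (dirac τ n) x} w) (top τ n i)
              = d n * ((n:ℝ≥0∞) + 1) := by
          intro i _
          rw [Set.indicator_of_mem (hl i) w]
          simp [hw, weight, top, hF]
        rw [Finset.sum_congr rfl hval, Finset.sum_const, Finset.card_univ,
          Fintype.card_fin, nsmul_eq_mul]
      calc (τ n : ℝ≥0∞) * (d n * ((n:ℝ≥0∞) + 1))
          = ∑ x ∈ s, (Set.indicator {x | l < Mnc w (dirac τ n) x} w) x := hs'.symm
        _ ≤ ∑' x, (Set.indicator {x | l < Mnc w (dirac τ n) x} w) x :=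
            ENNReal.sum_le_tsum s
    have hfin : l ^ p * mass w {x | l < Mnc w (dirac τ n) x}
        ≤ wnormP w p (Mnc w (dirac τ n)) := by
      unfold wnormP
      exact le_iSup (fun l : ℝ≥0∞ => l ^ p * mass w {x | l < Mnc w (dirac τ n) x}) l
    refine le_trans ?_ hfin
    rw [hlpp n, hldef, ENNReal.inv_rpow]
    calc ((n:ℝ≥0∞) + 1) * (τ n : ℝ≥0∞) / ((2 * ((n:ℝ≥0∞) + 3)) ^ p) * d n
        = ((2 * ((n:ℝ≥0∞) + 3)) ^ p)⁻¹ * ((τ n : ℝ≥0∞) * (d n * ((n:ℝ≥0∞) + 1))) := by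
          rw [div_eq_mul_inv]; ring
      _ ≤ ((2 * ((n:ℝ≥0∞) + 3)) ^ p)⁻¹ * mass w {x | l < Mnc w (dirac τ n) x} :=
          mul_le_mul_right hmassL _
  refine ⟨part1, part2, ?_⟩
  rintro ⟨C, hC, hCb⟩
  have hub : ∀ n : ℕ, (((n:ℝ≥0∞) + 1) * (τ n : ℝ≥0∞)) / ((2 * ((n:ℝ≥0∞) + 3)) ^ p) ≤ C := by
    intro n
    have h3 : wnormP w p (Mnc w (dirac τ n)) ≤ C * lpp w p (dirac τ n) := by
      unfold wnormP
      exact iSup_le fun l => hCb (dirac τ n) l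
    have h4 := le_trans (part2 n) h3
    rw [hlpp n] at h4
    exact (ENNReal.mul_le_mul_iff_left (hd n).1.ne' (hd n).2).mp h4
  have hofReal : ∀ n : ℕ,
      ENNReal.ofReal ((((n:ℝ) + 1) * (τ n : ℝ)) / (2 * ((n:ℝ) + 3)) ^ p)
        = (((n:ℝ≥0∞) + 1) * (τ n : ℝ≥0∞)) / ((2 * ((n:ℝ≥0∞) + 3)) ^ p) := by
    intro n
    have hn0 : (0:ℝ) ≤ (n:ℝ) := Nat.cast_nonneg n
    rw [ENNReal.ofReal_div_of_pos (Real.rpow_pos_of_pos (by linarith) p),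
      ENNReal.ofReal_mul (by linarith), ← ENNReal.ofReal_rpow_of_pos (by linarith),
      ENNReal.ofReal_mul (by norm_num)]
    norm_num [ENNReal.ofReal_add, ENNReal.ofReal_natCast]
  have hble : ∀ n : ℕ, (((n:ℝ) + 1) * (τ n : ℝ)) / (2 * ((n:ℝ) + 3)) ^ p ≤ C.toReal := by
    intro n
    rw [← ENNReal.ofReal_le_iff_le_toReal hC, hofReal n]
    exact hub n
  obtain ⟨n, hn⟩ := (part1.eventually_gt_atTop C.toReal).exists
  exact absurd (hble n) (not_le.mpr hn)
end

section
/- Let p0 ∈ (1,∞) and Ŷ_{p0} be the second generation space with τ_n = ⌊(n+1)^{p0}/n⌋ and F(n,i) = n. Then M is of strong type (p0,p0): ‖Mf‖_{p0}^{p0} ≤ (4 + 2·3^{p0+1}) ‖f‖_{p0}^{p0} for all f ∈ ℓ^{p0}. -/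
open scoped ENNReal Classical
open Filter Set

open SecondGen

/-! The `p₀`-th power of the maximal function at `x` is at most the sum of `(avg_B f)^{p₀}` over
the balls `B ∋ x`, so `‖Mf‖_{p₀}^{p₀} ≤ Σ_B (avg_B f)^{p₀} μ(B)`, and by Jensen each term is at
most `Σ_{y ∈ B} f(y)^{p₀} μ({y})`. Singletons, pairs `T_{n,i}` and lower branches form disjoint
families, and together with the whole space they contribute `4 ‖f‖_{p₀}^{p₀}`. A root `y_n` lies
in `τ_n` triples `{y_n, y_{n,i}, y'_{n,i}}`; splitting the average over a triple into its three
terms, the root term gains the factor `(n + 2)^{1 - p₀}` because the triple has mass at least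
`(n + 2) μ({y_n})`, and `τ_n (n + 2)^{1 - p₀} ≤ 2`. -/

namespace ENNReal

theorem rpow_weighted_mean_mul_tsum_le {ι : Type*} {p : ℝ} (hp : 1 ≤ p) (f w : ι → ℝ≥0∞) :
    ((∑' i, f i * w i) / ∑' i, w i) ^ p * ∑' i, w i ≤ ∑' i, f i ^ p * w i := by
  have hp0 : 0 < p := by linarith
  set m := ∑' i, w i
  set A := ∑' i, f i ^ p * w i
  rcases eq_or_ne m 0 with hm | hm
  · simp [hm]
  rcases eq_or_ne m ∞ with hm' | hm'
  · simp [hm', zero_rpow_of_pos hp0]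
  have h1 : 0 ≤ 1 / p := by positivity
  have h2 : 0 ≤ 1 - 1 / p := by rw [sub_nonneg, div_le_one hp0]; exact hp
  have holder : ∑' i, f i * w i ≤ A ^ (1 / p) * m ^ (1 - 1 / p) := by
    let _ : MeasurableSpace ι := ⊤
    have H := lintegral_mul_norm_pow_le (μ := MeasureTheory.Measure.count)
      (f := fun i => f i ^ p * w i) (g := w)
      measurable_from_top.aemeasurable measurable_from_top.aemeasurable h1 h2 (by ring)
    simp only [MeasureTheory.lintegral_count] at H
    refine le_of_eq_of_le (tsum_congr fun i => ?_) H
    rw [mul_rpow_of_nonneg _ _ h1, mul_assoc, ← rpow_add_of_nonneg _ _ h1 h2, ← rpow_mul,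
      mul_one_div_cancel hp0.ne', rpow_one]
    norm_num
  have hmp : m ^ p ≠ 0 := (rpow_pos (pos_iff_ne_zero.mpr hm) hm').ne'
  have hmp' : m ^ p ≠ ∞ := rpow_ne_top_of_nonneg hp0.le hm'
  have hm_pow : (m ^ (1 - 1 / p)) ^ p * m = m ^ p := by
    nth_rewrite 2 [← rpow_one m]
    rw [← rpow_mul, ← rpow_add _ _ hm hm']
    congr 1
    field_simp
    ring
  calc ((∑' i, f i * w i) / m) ^ p * m
      ≤ (A ^ (1 / p) * m ^ (1 - 1 / p) / m) ^ p * m := by gcongr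
    _ = A * ((m ^ (1 - 1 / p)) ^ p * m) / m ^ p := by
        rw [div_rpow_of_nonneg _ _ hp0.le, mul_rpow_of_nonneg _ _ hp0.le, ← rpow_mul,
          one_div_mul_cancel hp0.ne', rpow_one]
        simp only [div_eq_mul_inv]
        ring
    _ = A := by rw [hm_pow, ENNReal.mul_div_cancel_right hmp hmp']

theorem add_add_rpow_le {p : ℝ} (hp : 1 ≤ p) (x y z : ℝ≥0∞) :
    (x + y + z) ^ p ≤ 3 ^ (p - 1) * (x ^ p + y ^ p + z ^ p) := by
  simpa [Fin.sum_univ_three, add_assoc] using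
    rpow_sum_le_const_mul_sum_rpow (s := Finset.univ) (f := ![x, y, z]) hp

theorem mul_div_rpow_mul_le {p : ℝ} (hp : 1 ≤ p) (t : ℝ≥0∞) {v e m : ℝ≥0∞}
    (hv : v ≠ 0) (hv' : v ≠ ∞) (he : e ≠ 0) (he' : e ≠ ∞) (hm' : m ≠ ∞) (hvem : v * e ≤ m) :
    (t * v / m) ^ p * m ≤ t ^ p * v * e ^ (1 - p) := by
  have hp0 : 0 < p := by linarith
  have hm : m ≠ 0 := ((mul_pos hv he).bot_lt.trans_le hvem).ne'
  have hm_pow : (m ^ p)⁻¹ * m = m ^ (1 - p) := by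
    rw [sub_eq_add_neg, rpow_add _ _ hm hm', rpow_one, rpow_neg, mul_comm]
  calc (t * v / m) ^ p * m = t ^ p * v ^ p * m ^ (1 - p) := by
        rw [div_eq_mul_inv, mul_rpow_of_nonneg _ _ hp0.le, mul_rpow_of_nonneg _ _ hp0.le,
          inv_rpow, ← hm_pow]
        ring
    _ ≤ t ^ p * v ^ p * (v * e) ^ (1 - p) := by
        rw [show 1 - p = -(p - 1) by ring, rpow_neg, rpow_neg]
        gcongr
    _ = t ^ p * (v ^ p * v ^ (1 - p)) * e ^ (1 - p) := by
        rw [mul_rpow_of_ne_top hv' he']; ring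
    _ = t ^ p * v * e ^ (1 - p) := by rw [← rpow_add _ _ hv hv']; norm_num

theorem mul_div_rpow_mul_le_of_le {p : ℝ} (hp : 1 ≤ p) (t : ℝ≥0∞) {v m : ℝ≥0∞}
    (hv : v ≠ 0) (hv' : v ≠ ∞) (hm' : m ≠ ∞) (hvm : v ≤ m) :
    (t * v / m) ^ p * m ≤ t ^ p * v := by
  simpa using mul_div_rpow_mul_le hp t hv hv' one_ne_zero one_ne_top hm'
    (by simpa using hvm)

end ENNReal

open Function

section FamiliesOfSets

variable {ι X : Type*}

theorem iSup_mem_rpow_le_tsum_indicator {p : ℝ} (hp : 0 < p) (B : ι → Set X)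
    (a : ι → ℝ≥0∞) (x : X) :
    (⨆ j, ⨆ (_ : x ∈ B j), a j) ^ p ≤ ∑' j, (B j).indicator (fun _ => a j ^ p) x := by
  rw [← ENNReal.le_rpow_inv_iff hp]
  refine iSup₂_le fun j hj => (ENNReal.le_rpow_inv_iff hp).2 ?_
  simpa [Set.indicator_of_mem hj] using
    ENNReal.le_tsum (f := fun j => (B j).indicator (fun _ => a j ^ p) x) j

theorem tsum_tsum_indicator_mul (B : ι → Set X) (c : ι → ℝ≥0∞) (w : X → ℝ≥0∞) :
    ∑' x, (∑' j, (B j).indicator (fun _ => c j) x) * w x = ∑' j, c j * ∑' y : B j, w y := by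
  simp_rw [← ENNReal.tsum_mul_right, tsum_subtype, ← ENNReal.tsum_mul_left]
  rw [ENNReal.tsum_comm]
  refine tsum_congr fun j => tsum_congr fun x => ?_
  by_cases hx : x ∈ B j <;> simp [hx]

theorem tsum_tsum_subtype_le_of_pairwise_disjoint {B : ι → Set X}
    (hB : Pairwise (Disjoint on B)) (h : X → ℝ≥0∞) :
    ∑' j, ∑' y : B j, h y ≤ ∑' x, h x := by
  simp_rw [tsum_subtype]
  rw [ENNReal.tsum_comm]
  simp_rw [← indicator_iUnion_of_pairwise_disjoint B hB h]
  exact ENNReal.tsum_le_tsum (Set.indicator_le_self _ h)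

theorem tsum_insert_insert_singleton {a b c : X} (hab : a ≠ b) (hac : a ≠ c)
    (hbc : b ≠ c) (g : X → ℝ≥0∞) :
    ∑' x : ({a, b, c} : Set X), g x = g a + g b + g c := by
  rw [show ({a, b, c} : Set X) = ↑({a, b, c} : Finset X) by simp, Finset.tsum_subtype',
    Finset.sum_insert (by simp [hab, hac]), Finset.sum_pair hbc, add_assoc]

end FamiliesOfSets

theorem one_le_natFloor_rpow_div {p : ℝ} (hp : 1 ≤ p) (n : ℕ) :
    1 ≤ ⌊((n : ℝ) + 2) ^ p / ((n : ℝ) + 1)⌋₊ := by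
  refine Nat.floor_pos.2 ((one_le_div (by positivity)).2 ?_)
  calc (n : ℝ) + 1 ≤ (n : ℝ) + 2 := by linarith
    _ ≤ ((n : ℝ) + 2) ^ p := Real.self_le_rpow_of_one_le (by linarith) hp

theorem natFloor_rpow_div_mul_rpow_le (p : ℝ) (n : ℕ) :
    (⌊((n : ℝ) + 2) ^ p / ((n : ℝ) + 1)⌋₊ : ℝ≥0∞) * ((n : ℝ≥0∞) + 2) ^ (1 - p) ≤ 2 := by
  have hreal : (⌊((n : ℝ) + 2) ^ p / ((n : ℝ) + 1)⌋₊ : ℝ) * ((n : ℝ) + 2) ^ (1 - p) ≤ 2 :=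
    calc _ ≤ ((n : ℝ) + 2) ^ p / ((n : ℝ) + 1) * ((n : ℝ) + 2) ^ (1 - p) := by
          gcongr; exact Nat.floor_le (by positivity)
      _ = ((n : ℝ) + 2) / ((n : ℝ) + 1) := by
          rw [div_mul_eq_mul_div, ← Real.rpow_add (by positivity)]; norm_num
      _ ≤ 2 := by rw [div_le_iff₀ (by positivity)]; linarith
  have hcast : ((n : ℝ≥0∞) + 2) ^ (1 - p) = ENNReal.ofReal (((n : ℝ) + 2) ^ (1 - p)) := by
    rw [← ENNReal.ofReal_rpow_of_pos (by positivity)]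
    norm_cast
  rw [hcast, ← ENNReal.ofReal_natCast, ← ENNReal.ofReal_mul (by positivity)]
  exact ENNReal.ofReal_le_of_le_toReal (by simpa using hreal)

namespace SecondGen

variable {τ : ℕ → ℕ}

theorem avg_rpow_mul_mass_le {p : ℝ} (hp : 1 ≤ p) (w f : YPt τ → ℝ≥0∞) (s : Set (YPt τ)) :
    avg w f s ^ p * mass w s ≤ ∑' x : s, f x ^ p * w x :=
  ENNReal.rpow_weighted_mean_mul_tsum_le hp _ _

theorem tsum_avg_rpow_mul_mass_le_lpp {p : ℝ} (hp : 1 ≤ p) (w f : YPt τ → ℝ≥0∞) {ι : Type*}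
    {B : ι → Set (YPt τ)} (hB : Pairwise (Disjoint on B)) :
    ∑' j, avg w f (B j) ^ p * mass w (B j) ≤ lpp w p f :=
  (ENNReal.tsum_le_tsum fun j => avg_rpow_mul_mass_le hp w f (B j)).trans
    (tsum_tsum_subtype_le_of_pairwise_disjoint hB _)

theorem avg_univ_rpow_mul_mass_le_lpp {p : ℝ} (hp : 1 ≤ p) (w f : YPt τ → ℝ≥0∞) :
    avg w f univ ^ p * mass w univ ≤ lpp w p f :=
  (avg_rpow_mul_mass_le hp w f univ).trans_eq (tsum_univ fun x => f x ^ p * w x)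

theorem pairwise_disjoint_pairB :
    Pairwise (Disjoint on fun q : Σ n, Fin (τ n) => pairB τ q.1 q.2) := by
  rintro ⟨n, i⟩ ⟨n', i'⟩ hne
  simp_all [onFun, pairB, mid, top]
  rintro rfl h
  exact hne rfl h.symm

theorem pairwise_disjoint_low : Pairwise (Disjoint on low τ) := by
  intro n n' hne
  simp only [onFun, Set.disjoint_left, low, Set.mem_ofPred_eq]
  rintro x (rfl | ⟨i, rfl⟩) <;> simp [root, mid, hne]

theorem lpp_eq_tsum_root_add_tsum_mid_add_tsum_top (w f : YPt τ → ℝ≥0∞) (p : ℝ) :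
    lpp w p f = ∑' n, f (root τ n) ^ p * w (root τ n)
      + ∑' q : Σ n, Fin (τ n), f (mid τ q.1 q.2) ^ p * w (mid τ q.1 q.2)
      + ∑' q : Σ n, Fin (τ n), f (top τ q.1 q.2) ^ p * w (top τ q.1 q.2) := by
  rw [lpp, ENNReal.summable.tsum_sum ENNReal.summable,
    ENNReal.summable.tsum_sum ENNReal.summable, add_assoc]
  rfl

abbrev BallIndex (τ : ℕ → ℕ) := YPt τ ⊕ (Σ n, Fin (τ n)) ⊕ (Σ n, Fin (τ n)) ⊕ ℕ ⊕ Unit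

def ballOf : BallIndex τ → Set (YPt τ)
  | .inl x => {x}
  | .inr (.inl q) => triple τ q.1 q.2
  | .inr (.inr (.inl q)) => pairB τ q.1 q.2
  | .inr (.inr (.inr (.inl n))) => low τ n
  | .inr (.inr (.inr (.inr _))) => univ

theorem range_ballOf : range (ballOf (τ := τ)) = balls τ := by
  ext B
  constructor
  · rintro ⟨x | ⟨n, i⟩ | ⟨n, i⟩ | n | _, rfl⟩
    exacts [.inl ⟨x, rfl⟩, .inr (.inl ⟨n, i, rfl⟩), .inr (.inr (.inl ⟨n, i, rfl⟩)),
      .inr (.inr (.inr (.inl ⟨n, rfl⟩))), .inr (.inr (.inr (.inr rfl)))]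
  · rintro (⟨x, rfl⟩ | ⟨n, i, rfl⟩ | ⟨n, i, rfl⟩ | ⟨n, rfl⟩ | rfl)
    exacts [⟨.inl x, rfl⟩, ⟨.inr (.inl ⟨n, i⟩), rfl⟩, ⟨.inr (.inr (.inl ⟨n, i⟩)), rfl⟩,
      ⟨.inr (.inr (.inr (.inl n))), rfl⟩, ⟨.inr (.inr (.inr (.inr ()))), rfl⟩]

theorem Mnc_eq_iSup_ballOf (w f : YPt τ → ℝ≥0∞) (x : YPt τ) :
    Mnc w f x = ⨆ j, ⨆ (_ : x ∈ ballOf j), avg w f (ballOf j) := by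
  rw [Mnc, ← range_ballOf, iSup_range]

theorem lpp_Mnc_le_tsum_ballOf {p : ℝ} (hp : 0 < p) (w f : YPt τ → ℝ≥0∞) :
    lpp w p (Mnc w f) ≤ ∑' j, avg w f (ballOf j) ^ p * mass w (ballOf j) :=
  calc lpp w p (Mnc w f)
      ≤ ∑' x, (∑' j, (ballOf j).indicator (fun _ => avg w f (ballOf j) ^ p) x) * w x := by
        refine ENNReal.tsum_le_tsum fun x => ?_
        rw [Mnc_eq_iSup_ballOf]
        gcongr
        exact iSup_mem_rpow_le_tsum_indicator hp _ _ x
    _ = _ := tsum_tsum_indicator_mul _ _ w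

theorem tsum_ballOf (g : Set (YPt τ) → ℝ≥0∞) :
    ∑' j, g (ballOf j) = ∑' x, g {x} + ∑' q : Σ n, Fin (τ n), g (triple τ q.1 q.2)
      + ∑' q : Σ n, Fin (τ n), g (pairB τ q.1 q.2) + ∑' n, g (low τ n) + g univ := by
  simp only [ENNReal.summable.tsum_sum ENNReal.summable, tsum_fintype, Finset.univ_unique,
    Finset.sum_singleton, add_assoc]
  rfl

theorem tsum_triple (g : YPt τ → ℝ≥0∞) (n : ℕ) (i : Fin (τ n)) :
    ∑' x : triple τ n i, g x = g (root τ n) + g (mid τ n i) + g (top τ n i) :=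
  tsum_insert_insert_singleton (by simp [root, mid]) (by simp [root, top]) (by simp [mid, top]) g

theorem mass_triple (w : YPt τ → ℝ≥0∞) (n : ℕ) (i : Fin (τ n)) :
    mass w (triple τ n i) = w (root τ n) + w (mid τ n i) + w (top τ n i) :=
  tsum_triple w n i

variable {d : ℕ → ℝ≥0∞} {F : (n : ℕ) → Fin (τ n) → ℝ≥0∞}

theorem avg_triple_rpow_mul_mass_le {p : ℝ} (hp : 1 ≤ p) {n : ℕ} {i : Fin (τ n)}
    (hτ : τ n ≠ 0) (hd : d n ≠ 0) (hd' : d n ≠ ∞) (hF : F n i = n + 1) (f : YPt τ → ℝ≥0∞) :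
    avg (weight τ d F) f (triple τ n i) ^ p * mass (weight τ d F) (triple τ n i) ≤
      3 ^ (p - 1) * (f (root τ n) ^ p * d n * ((n : ℝ≥0∞) + 2) ^ (1 - p)
        + f (mid τ n i) ^ p * weight τ d F (mid τ n i)
        + f (top τ n i) ^ p * weight τ d F (top τ n i)) := by
  set w := weight τ d F
  have hroot : w (root τ n) = d n := rfl
  have hmid : w (mid τ n i) = d n / τ n := rfl
  have htop : w (top τ n i) = d n * (n + 1) := by simp [w, weight, top, hF]
  have hmid0 : w (mid τ n i) ≠ 0 := by simp [hmid, hd]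
  have hmid' : w (mid τ n i) ≠ ∞ := by
    rw [hmid]; exact ENNReal.div_ne_top hd' (Nat.cast_ne_zero.2 hτ)
  have htop0 : w (top τ n i) ≠ 0 := by simp [htop, hd]
  have htop' : w (top τ n i) ≠ ∞ := by rw [htop]; exact ENNReal.mul_ne_top hd' (by simp)
  have hmass := mass_triple w n i
  set m := mass w (triple τ n i)
  have hm' : m ≠ ∞ := by simp [hmass, hroot, hd', hmid', htop']
  have hroot_le : d n * (n + 2) ≤ m := by
    calc d n * (n + 2) = w (root τ n) + w (top τ n i) := by rw [hroot, htop]; ring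
      _ ≤ m := by rw [hmass]; gcongr; exact le_self_add
  calc avg w f (triple τ n i) ^ p * m
      = ((f (root τ n) * w (root τ n)) / m + (f (mid τ n i) * w (mid τ n i)) / m
          + (f (top τ n i) * w (top τ n i)) / m) ^ p * m := by
        rw [avg, tsum_triple (fun x => f x * w x), ENNReal.add_div, ENNReal.add_div]
    _ ≤ 3 ^ (p - 1) * ((f (root τ n) * w (root τ n) / m) ^ p * m
          + (f (mid τ n i) * w (mid τ n i) / m) ^ p * m
          + (f (top τ n i) * w (top τ n i) / m) ^ p * m) := by
        grw [ENNReal.add_add_rpow_le hp, mul_assoc, add_mul, add_mul]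
    _ ≤ _ := by
        gcongr 3 ^ (p - 1) * (?_ + ?_ + ?_)
        · rw [hroot]
          exact ENNReal.mul_div_rpow_mul_le hp _ hd hd' (by simp) (by simp) hm' hroot_le
        · exact ENNReal.mul_div_rpow_mul_le_of_le hp _ hmid0 hmid' hm'
            (by rw [hmass]; exact le_add_right le_add_self)
        · exact ENNReal.mul_div_rpow_mul_le_of_le hp _ htop0 htop' hm'
            (by rw [hmass]; exact le_add_self)

theorem tsum_avg_triple_rpow_mul_mass_le {p : ℝ} (hp : 1 ≤ p)
    (hτ : ∀ n : ℕ, τ n = ⌊((n : ℝ) + 2) ^ p / ((n : ℝ) + 1)⌋₊) (hd : ∀ n, d n ≠ 0)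
    (hd' : ∀ n, d n ≠ ∞) (hF : ∀ n i, F n i = (n : ℝ≥0∞) + 1) (f : YPt τ → ℝ≥0∞) :
    ∑' q : Σ n, Fin (τ n), avg (weight τ d F) f (triple τ q.1 q.2) ^ p
        * mass (weight τ d F) (triple τ q.1 q.2) ≤ 2 * 3 ^ (p - 1) * lpp (weight τ d F) p f := by
  set w := weight τ d F
  set h : YPt τ → ℝ≥0∞ := fun x => f x ^ p * w x
  have hτ0 : ∀ n, τ n ≠ 0 := fun n =>
    Nat.one_le_iff_ne_zero.1 (hτ n ▸ one_le_natFloor_rpow_div hp n)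
  have hroots : ∀ n, ∑ i : Fin (τ n), f (root τ n) ^ p * d n * ((n : ℝ≥0∞) + 2) ^ (1 - p)
      ≤ 2 * h (root τ n) := fun n => by
    rw [Finset.sum_const, Finset.card_univ, Fintype.card_fin, nsmul_eq_mul]
    calc (τ n : ℝ≥0∞) * (f (root τ n) ^ p * d n * ((n : ℝ≥0∞) + 2) ^ (1 - p))
        = (τ n * ((n : ℝ≥0∞) + 2) ^ (1 - p)) * h (root τ n) := by
          simp only [h]; rw [show w (root τ n) = d n from rfl]; ring
      _ ≤ 2 * h (root τ n) := by grw [hτ n, natFloor_rpow_div_mul_rpow_le]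
  calc ∑' q : Σ n, Fin (τ n), avg w f (triple τ q.1 q.2) ^ p * mass w (triple τ q.1 q.2)
      ≤ ∑' n, ∑ i : Fin (τ n), 3 ^ (p - 1) * (f (root τ n) ^ p * d n * ((n : ℝ≥0∞) + 2) ^ (1 - p)
          + h (mid τ n i) + h (top τ n i)) := by
        rw [ENNReal.tsum_sigma']
        gcongr with n
        rw [tsum_fintype]
        exact Finset.sum_le_sum fun i _ =>
          avg_triple_rpow_mul_mass_le hp (hτ0 n) (hd n) (hd' n) (hF n i) f
    _ ≤ ∑' n, 3 ^ (p - 1) * (2 * h (root τ n) + ∑ i : Fin (τ n), h (mid τ n i)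
          + ∑ i : Fin (τ n), h (top τ n i)) := by
        gcongr with n
        rw [← Finset.mul_sum, Finset.sum_add_distrib, Finset.sum_add_distrib]
        grw [hroots n]
    _ = 3 ^ (p - 1) * (2 * ∑' n, h (root τ n) + ∑' q : Σ n, Fin (τ n), h (mid τ q.1 q.2)
          + ∑' q : Σ n, Fin (τ n), h (top τ q.1 q.2)) := by
        simp only [ENNReal.tsum_mul_left, ENNReal.tsum_add, ENNReal.tsum_sigma', tsum_fintype]
    _ ≤ 3 ^ (p - 1) * (2 * (∑' n, h (root τ n) + ∑' q : Σ n, Fin (τ n), h (mid τ q.1 q.2)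
          + ∑' q : Σ n, Fin (τ n), h (top τ q.1 q.2))) := by
        rw [mul_add 2, mul_add 2]
        gcongr <;> exact le_mul_of_one_le_left' (by norm_num)
    _ = 2 * 3 ^ (p - 1) * lpp w p f := by
        rw [lpp_eq_tsum_root_add_tsum_mid_add_tsum_top]
        ring

end SecondGen

-- Branch `n` here is the paper's branch `n + 1`.
theorem Yhat_noncen_strong_general (p0 : ℝ) (hp0 : 1 < p0)
    (τ : ℕ → ℕ) (hτ : ∀ n : ℕ, τ n = ⌊((n : ℝ) + 2) ^ p0 / ((n : ℝ) + 1)⌋₊)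
    (d : ℕ → ℝ≥0∞) (hd : ∀ n, 0 < d n ∧ d n ≠ ∞)
    (F : (n : ℕ) → Fin (τ n) → ℝ≥0∞) (hF : ∀ n i, F n i = (n : ℝ≥0∞) + 1) :
    ∀ f : YPt τ → ℝ≥0∞,
      lpp (weight τ d F) p0 (Mnc (weight τ d F) f)
        ≤ (4 + 2 * 3 ^ (p0 + 1)) * lpp (weight τ d F) p0 f := by
  intro f
  set w := weight τ d F
  set L := lpp w p0 f
  have hp : 1 ≤ p0 := hp0.le
  calc lpp w p0 (Mnc w f)
      ≤ ∑' j, avg w f (ballOf j) ^ p0 * mass w (ballOf j) :=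
        lpp_Mnc_le_tsum_ballOf (by linarith) w f
    _ ≤ L + 2 * 3 ^ (p0 - 1) * L + L + L + L := by
        rw [tsum_ballOf fun B => avg w f B ^ p0 * mass w B]
        gcongr
        · exact tsum_avg_rpow_mul_mass_le_lpp hp w f fun _ _ => Set.disjoint_singleton.2
        · exact tsum_avg_triple_rpow_mul_mass_le hp hτ (fun n => (hd n).1.ne')
            (fun n => (hd n).2) hF f
        · exact tsum_avg_rpow_mul_mass_le_lpp hp w f pairwise_disjoint_pairB
        · exact tsum_avg_rpow_mul_mass_le_lpp hp w f pairwise_disjoint_low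
        · exact avg_univ_rpow_mul_mass_le_lpp hp w f
    _ ≤ L + 2 * 3 ^ (p0 + 1) * L + L + L + L := by
        gcongr
        exacts [by norm_num, by linarith]
    _ = (4 + 2 * 3 ^ (p0 + 1)) * L := by ring

/-- in the second generation space `Ŷ_{p₀}`, `p₀ ∈ (1,∞)` (branch `n`
here is the paper's branch `n+1`, with `τ n = ⌊(n+2)^{p₀}/(n+1)⌋` and top weights
`(n+1) d n`), the non-centered maximal operator is of strong type `(p₀,p₀)`:
`‖Mf‖_{p₀}^{p₀} ≤ (4 + 2·3^{p₀+1}) ‖f‖_{p₀}^{p₀}` for all `f`. -/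
theorem Yhat_noncen_strong (p0 : ℝ) (hp0 : 1 < p0)
    (τ : ℕ → ℕ) (hτ : ∀ n : ℕ, τ n = ⌊((n : ℝ) + 2) ^ p0 / ((n : ℝ) + 1)⌋₊)
    (d : ℕ → ℝ≥0∞) (hd : ∀ n, 0 < d n ∧ d n ≠ ∞) (hd1 : d 0 = 1)
    (F : (n : ℕ) → Fin (τ n) → ℝ≥0∞) (hF : ∀ n i, F n i = (n : ℝ≥0∞) + 1)
    (hhalf : ∀ n, mass (weight τ d F) (branch τ (n + 1))
      = mass (weight τ d F) (branch τ n) / 2) :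
    ∀ f : YPt τ → ℝ≥0∞,
      lpp (weight τ d F) p0 (Mnc (weight τ d F) f)
        ≤ (4 + 2 * 3 ^ (p0 + 1)) * lpp (weight τ d F) p0 f :=
  Yhat_noncen_strong_general p0 hp0 τ hτ d hd F hF
end

section
/- Suppose Z is the disjoint union of two metric measure spaces X and Y, metrized by ρ_Z = ρ_X on X, ρ_Y on Y, and ρ_Z(x,y) = 2 for x ∈ X, y ∈ Y, where ρ_X, ρ_Y are metrics bounded by 2, and μ_Z(E) = μ_X(E∩X) + μ_Y(E∩Y) with μ_X(X), μ_Y(Y) < ∞. Then for each p ∈ [1,∞], the maximal operator on Z (centered or non-centered) is of strong (resp. weak) type (p,p) if and only if the corresponding maximal operators on both X and Y are of strong (resp. weak) type (p,p); i.e. P_s(Z) = P_s(X) ∩ P_s(Y), and similarly for P_s^c, P_w, P_w^c. -/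
open MeasureTheory Metric ENNReal Filter Set

variable {α : Type*}

/-- Average of `f` over a set `s` with respect to `μ`. -/
noncomputable def ballAvg [MeasurableSpace α] (μ : Measure α)
    (s : Set α) (f : α → ℝ≥0∞) : ℝ≥0∞ :=
  (∫⁻ y in s, f y ∂μ) / μ s

/-- Centered Hardy–Littlewood maximal operator. -/
noncomputable def cenMax [MetricSpace α] [MeasurableSpace α] (μ : Measure α)
    (f : α → ℝ≥0∞) (x : α) : ℝ≥0∞ :=
  ⨆ (r : ℝ) (_ : 0 < r), ballAvg μ (Metric.ball x r) f

/-- Non-centered Hardy–Littlewood maximal operator. -/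
noncomputable def ncMax [MetricSpace α] [MeasurableSpace α] (μ : Measure α)
    (f : α → ℝ≥0∞) (x : α) : ℝ≥0∞ :=
  ⨆ (c : α) (r : ℝ) (_ : 0 < r) (_ : x ∈ Metric.ball c r), ballAvg μ (Metric.ball c r) f

/-- The `L^p` norm (with `L^∞` given by the essential supremum). -/
noncomputable def lpN [MeasurableSpace α] (μ : Measure α) (p : ℝ≥0∞) (f : α → ℝ≥0∞) : ℝ≥0∞ :=
  if p = ∞ then essSup f μ else (∫⁻ x, f x ^ p.toReal ∂μ) ^ (1 / p.toReal)

/-- `T` is of strong type `(p,p)`. -/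
def IsStrongType [MeasurableSpace α] (μ : Measure α)
    (T : (α → ℝ≥0∞) → α → ℝ≥0∞) (p : ℝ≥0∞) : Prop :=
  ∃ C : ℝ≥0∞, C ≠ ∞ ∧ ∀ f : α → ℝ≥0∞, Measurable f → lpN μ p (T f) ≤ C * lpN μ p f

/-- `T` is of weak type `(p,p)` (for `p = ∞` this means strong type `(∞,∞)`). -/
def IsWeakType [MeasurableSpace α] (μ : Measure α)
    (T : (α → ℝ≥0∞) → α → ℝ≥0∞) (p : ℝ≥0∞) : Prop :=
  if p = ∞ then IsStrongType μ T p
  else ∃ C : ℝ≥0∞, C ≠ ∞ ∧ ∀ f : α → ℝ≥0∞, Measurable f →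
    ∀ l : ℝ≥0∞, l * (μ {x | l < T f x}) ^ (1 / p.toReal) ≤ C * lpN μ p f

/-- The measure induced on a subset. -/
noncomputable def subMeasure {Z : Type*} [MeasurableSpace Z] (μ : Measure Z) (A : Set Z) :
    Measure A :=
  μ.comap Subtype.val

/-
Balls of radius at most `2` centred in one piece stay inside that piece, and balls of larger
radius are the whole space. Hence, at a point of `A`, the maximal function of `f` on `Z` is at
most that of `f|_A` on `A` joined with the average of `f` over `Z`, and conversely with the
average of `f|_A` over `A`. Such a constant `c` costs at most `c μ(univ)^{1/p}` in (weak) `L^p`,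
and Hölder's inequality gives `(⨍ f) μ(univ)^{1/p} ≤ ‖f‖_p`, so the averages only add `‖f‖_p` to
the bounds. Beyond this, the transfer between `Z` and its pieces only uses that the (weak) `L^p`
norm is monotone and is controlled by, and controls, its restrictions to `A` and `B`.
-/

section LpNorm

variable {α ε : Type*} [MeasurableSpace α] [ENorm ε] {μ ν : Measure α} {p : ℝ≥0∞}

lemma one_div_toReal_le_one (hp : 1 ≤ p) : 1 / p.toReal ≤ 1 := by
  rcases eq_or_ne p ∞ with rfl | hp_top
  · simp
  · exact div_le_one_of_le₀ (by simpa using ENNReal.toReal_mono hp_top hp) ENNReal.toReal_nonneg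

lemma le_restrict_add_restrict {s t : Set α} (hst : s ∪ t = univ) :
    μ ≤ μ.restrict s + μ.restrict t := by
  simpa [hst] using Measure.restrict_union_le (μ := μ) s t

theorem eLpNorm_add_measure_le (hp : 1 ≤ p) (f : α → ε) :
    eLpNorm f p (μ + ν) ≤ eLpNorm f p μ + eLpNorm f p ν := by
  rcases eq_or_ne p ∞ with rfl | hp_top
  · simp only [eLpNorm_exponent_top, eLpNormEssSup]
    refine essSup_le_of_ae_le _ (ae_add_measure_iff.2 ⟨?_, ?_⟩)
    · filter_upwards [ENNReal.ae_le_essSup (μ := μ) fun x => ‖f x‖ₑ] with x hx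
      exact hx.trans le_self_add
    · filter_upwards [ENNReal.ae_le_essSup (μ := ν) fun x => ‖f x‖ₑ] with x hx
      exact hx.trans le_add_self
  · have hp0 : p ≠ 0 := (zero_lt_one.trans_le hp).ne'
    simp only [eLpNorm_eq_lintegral_rpow_enorm_toReal hp0 hp_top, lintegral_add_measure]
    exact ENNReal.rpow_add_le_add_rpow _ _ (by positivity) (one_div_toReal_le_one hp)

lemma lpN_eq_eLpNorm (hp : p ≠ 0) (f : α → ℝ≥0∞) : lpN μ p f = eLpNorm f p μ := by
  rcases eq_or_ne p ∞ with rfl | hp_top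
  · simp [lpN, eLpNorm_exponent_top, eLpNormEssSup]
  · simp [lpN, hp_top, eLpNorm_eq_lintegral_rpow_enorm_toReal hp hp_top]

lemma eLpNorm_sup_const_le (hp : 1 ≤ p) (h : α → ℝ≥0∞) (c : ℝ≥0∞) :
    eLpNorm (fun x => h x ⊔ c) p μ ≤ eLpNorm h p μ + c * μ univ ^ (1 / p.toReal) := by
  rcases eq_or_ne p ∞ with rfl | hp_top
  · simp only [eLpNorm_exponent_top, eLpNormEssSup, enorm_eq_self, ENNReal.toReal_top]
    rw [div_zero (1 : ℝ), ENNReal.rpow_zero, mul_one]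
    calc essSup (fun x => h x ⊔ c) μ ≤ essSup (h + fun _ => c) μ :=
          essSup_mono_ae (ae_of_all _ fun x => sup_le le_self_add le_add_self)
      _ ≤ essSup h μ + essSup (fun _ => c) μ := ENNReal.essSup_add_le _ _
      _ ≤ essSup h μ + c := by gcongr; exact essSup_le_of_ae_le c (ae_of_all _ fun _ => le_rfl)
  · have hp0 : p ≠ 0 := (zero_lt_one.trans_le hp).ne'
    have hq : 0 < p.toReal := ENNReal.toReal_pos hp0 hp_top
    simp only [eLpNorm_eq_lintegral_rpow_enorm_toReal hp0 hp_top, enorm_eq_self]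
    calc (∫⁻ x, (h x ⊔ c) ^ p.toReal ∂μ) ^ (1 / p.toReal)
        ≤ (∫⁻ x, h x ^ p.toReal ∂μ + c ^ p.toReal * μ univ) ^ (1 / p.toReal) := by
          rw [← lintegral_const, ← lintegral_add_right _ measurable_const]
          gcongr with x
          rcases le_total (h x) c with hhc | hhc
          · rw [sup_eq_right.2 hhc]; exact le_add_self
          · rw [sup_eq_left.2 hhc]; exact le_self_add
      _ ≤ (∫⁻ x, h x ^ p.toReal ∂μ) ^ (1 / p.toReal) + (c ^ p.toReal * μ univ) ^ (1 / p.toReal) :=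
          ENNReal.rpow_add_le_add_rpow _ _ (by positivity) (one_div_toReal_le_one hp)
      _ = _ := by
          rw [ENNReal.mul_rpow_of_nonneg _ _ (by positivity), ← ENNReal.rpow_mul,
            mul_one_div_cancel hq.ne', ENNReal.rpow_one]

lemma ballAvg_univ_mul_le_lpN (hp : 1 ≤ p) {f : α → ℝ≥0∞} (hf : Measurable f) :
    ballAvg μ univ f * μ univ ^ (1 / p.toReal) ≤ lpN μ p f := by
  rw [ballAvg, Measure.restrict_univ, lpN_eq_eLpNorm (zero_lt_one.trans_le hp).ne']
  rcases eq_or_ne (μ univ) 0 with hμ | hμ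
  · simp [Measure.measure_univ_eq_zero.1 hμ]
  rcases eq_or_ne (μ univ) ∞ with hμ' | hμ'
  · simp [hμ']
  have holder : ∫⁻ x, f x ∂μ ≤ eLpNorm f p μ * μ univ ^ (1 - 1 / p.toReal) := by
    simpa [eLpNorm_one_eq_lintegral_enorm] using
      eLpNorm_le_eLpNorm_mul_rpow_measure_univ hp hf.aestronglyMeasurable
  calc (∫⁻ x, f x ∂μ) / μ univ * μ univ ^ (1 / p.toReal)
      ≤ eLpNorm f p μ * μ univ ^ (1 - 1 / p.toReal) / μ univ * μ univ ^ (1 / p.toReal) := by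
        gcongr
    _ = eLpNorm f p μ := by
        rw [div_eq_mul_inv, mul_assoc, mul_assoc, ← ENNReal.rpow_neg_one,
          ← ENNReal.rpow_add _ _ hμ hμ', ← ENNReal.rpow_add _ _ hμ hμ']
        norm_num

end LpNorm

section WeakLpNorm

variable {α : Type*} [MeasurableSpace α] {μ ν : Measure α} {p : ℝ≥0∞}

/-- The weak `L^p` quasinorm, meaningful only for `p < ∞`: at `p = ∞` the exponent
`1 / p.toReal` is `0`. -/
noncomputable def weakLpN (μ : Measure α) (p : ℝ≥0∞) (f : α → ℝ≥0∞) : ℝ≥0∞ :=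
  ⨆ l : ℝ≥0∞, l * μ {x | l < f x} ^ (1 / p.toReal)

lemma weakLpN_mono {f g : α → ℝ≥0∞} (hfg : f ≤ g) : weakLpN μ p f ≤ weakLpN μ p g :=
  iSup_mono fun l => by
    gcongr with x
    exact hfg x

lemma weakLpN_mono_measure (hμν : μ ≤ ν) (f : α → ℝ≥0∞) : weakLpN μ p f ≤ weakLpN ν p f :=
  iSup_mono fun l => by gcongr

lemma weakLpN_add_measure_le (hp : 1 ≤ p) (f : α → ℝ≥0∞) :
    weakLpN (μ + ν) p f ≤ weakLpN μ p f + weakLpN ν p f := by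
  refine iSup_le fun l => ?_
  calc l * (μ + ν) {x | l < f x} ^ (1 / p.toReal)
      ≤ l * (μ {x | l < f x} ^ (1 / p.toReal) + ν {x | l < f x} ^ (1 / p.toReal)) := by
        gcongr
        exact ENNReal.rpow_add_le_add_rpow _ _ (by positivity) (one_div_toReal_le_one hp)
    _ ≤ weakLpN μ p f + weakLpN ν p f := by
        rw [mul_add]
        exact add_le_add (le_iSup (fun l => l * μ {x | l < f x} ^ (1 / p.toReal)) l)
          (le_iSup (fun l => l * ν {x | l < f x} ^ (1 / p.toReal)) l)

lemma weakLpN_sup_const_le (hp : 1 ≤ p) (hp_top : p ≠ ∞) (h : α → ℝ≥0∞) (c : ℝ≥0∞) :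
    weakLpN μ p (fun x => h x ⊔ c) ≤ weakLpN μ p h + c * μ univ ^ (1 / p.toReal) := by
  refine iSup_le fun l => ?_
  have hsplit : μ {x | l < h x ⊔ c} ≤ μ {x | l < h x} + μ {_x | l < c} :=
    (measure_mono fun x (hx : l < h x ⊔ c) => lt_sup_iff.1 hx).trans (measure_union_le _ _)
  calc l * μ {x | l < h x ⊔ c} ^ (1 / p.toReal)
      ≤ l * (μ {x | l < h x} ^ (1 / p.toReal) + μ {_x | l < c} ^ (1 / p.toReal)) := by
        gcongr
        exact (ENNReal.rpow_le_rpow hsplit (by positivity)).trans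
          (ENNReal.rpow_add_le_add_rpow _ _ (by positivity) (one_div_toReal_le_one hp))
    _ ≤ weakLpN μ p h + c * μ univ ^ (1 / p.toReal) := by
        rw [mul_add]
        refine add_le_add (le_iSup (fun l => l * μ {x | l < h x} ^ (1 / p.toReal)) l) ?_
        by_cases hlc : l < c
        · gcongr
          exact subset_univ _
        · have hq : 0 < 1 / p.toReal :=
            one_div_pos.2 (ENNReal.toReal_pos (zero_lt_one.trans_le hp).ne' hp_top)
          simp only [hlc, ofPred_false, measure_empty, ENNReal.zero_rpow_of_pos hq, mul_zero]
          exact zero_le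

end WeakLpNorm

section SubMeasure

variable {α : Type*} [MeasurableSpace α] {μ : Measure α} {s : Set α} {p : ℝ≥0∞}

lemma subMeasure_preimage (hs : MeasurableSet s) (t : Set α) :
    subMeasure μ s ((↑) ⁻¹' t) = μ.restrict s t := by
  rw [subMeasure, comap_subtype_coe_apply hs, image_preimage_eq_inter_range, Subtype.range_coe,
    Measure.restrict_apply' hs]

lemma subMeasure_univ_le (hs : MeasurableSet s) : subMeasure μ s univ ≤ μ univ := by
  simpa using (subMeasure_preimage (μ := μ) hs univ).trans_le (Measure.restrict_apply_le _ _)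

lemma lpN_subMeasure (hp : p ≠ 0) (hs : MeasurableSet s) (f : α → ℝ≥0∞) :
    lpN (subMeasure μ s) p (f ∘ (↑)) = eLpNorm f p (μ.restrict s) := by
  rw [lpN_eq_eLpNorm hp, ← (MeasurableEmbedding.subtype_coe hs).eLpNorm_map_measure, subMeasure,
    map_comap_subtype_coe hs]

lemma weakLpN_subMeasure (hs : MeasurableSet s) (f : α → ℝ≥0∞) :
    weakLpN (subMeasure μ s) p (f ∘ (↑)) = weakLpN (μ.restrict s) p f := by
  simp only [weakLpN, ← subMeasure_preimage hs]
  rfl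

lemma lpN_extend_subtype (hp : p ≠ 0) (hs : MeasurableSet s) (g : s → ℝ≥0∞) :
    lpN μ p (Function.extend Subtype.val g 0) = lpN (subMeasure μ s) p g := by
  have hsupp : Function.support (Function.extend Subtype.val g 0) ⊆ s := fun x hx => by
    by_contra hxs
    exact hx (Function.extend_apply' g (0 : α → ℝ≥0∞) x fun ⟨a, ha⟩ => hxs (ha ▸ a.2))
  calc lpN μ p (Function.extend Subtype.val g 0)
      = eLpNorm (Function.extend Subtype.val g 0) p (μ.restrict s) := by
        rw [lpN_eq_eLpNorm hp, eLpNorm_restrict_eq_of_support_subset hsupp]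
    _ = lpN (subMeasure μ s) p g := by
        rw [← lpN_subMeasure hp hs, Function.extend_comp Subtype.val_injective]

lemma ballAvg_subMeasure_preimage (hs : MeasurableSet s) {t : Set α} (hts : t ⊆ s)
    (f : α → ℝ≥0∞) :
    ballAvg (subMeasure μ s) ((↑) ⁻¹' t) (f ∘ (↑)) = ballAvg μ t f := by
  rw [ballAvg, ballAvg, subMeasure_preimage hs, Measure.restrict_apply' hs, inter_eq_left.2 hts,
    subMeasure, Function.comp_def, setLIntegral_subtype hs, image_preimage_eq_inter_range,
    Subtype.range_coe, inter_eq_left.2 hts]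

end SubMeasure

section Bounded

variable {α : Type*} [MeasurableSpace α] {μ : Measure α} {p : ℝ≥0∞}
  {T : (α → ℝ≥0∞) → α → ℝ≥0∞}

/-- `IsStrongType μ T p` unfolds to `IsLpBounded (lpN μ p) μ p T`. -/
def IsLpBounded (N : (α → ℝ≥0∞) → ℝ≥0∞) (μ : Measure α) (p : ℝ≥0∞)
    (T : (α → ℝ≥0∞) → α → ℝ≥0∞) : Prop :=
  ∃ C : ℝ≥0∞, C ≠ ∞ ∧ ∀ f, Measurable f → N (T f) ≤ C * lpN μ p f

lemma isWeakType_iff_isLpBounded (hp : p ≠ ∞) :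
    IsWeakType μ T p ↔ IsLpBounded (weakLpN μ p) μ p T := by
  simp only [IsWeakType, if_neg hp, IsLpBounded, weakLpN, iSup_le_iff]

lemma isWeakType_top : IsWeakType μ T ∞ ↔ IsStrongType μ T ∞ := by
  simp [IsWeakType]

end Bounded

universe u

structure IsSplittableNorm (p : ℝ≥0∞)
    (N : ∀ {W : Type u} [MeasurableSpace W], Measure W → (W → ℝ≥0∞) → ℝ≥0∞) : Prop where
  mono {W : Type u} [MeasurableSpace W] (ν : Measure W) {g h : W → ℝ≥0∞} :
    g ≤ h → N ν g ≤ N ν h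
  sup_const_le {W : Type u} [MeasurableSpace W] (ν : Measure W) (h : W → ℝ≥0∞) (c : ℝ≥0∞) :
    N ν (fun x => h x ⊔ c) ≤ N ν h + c * ν univ ^ (1 / p.toReal)
  comp_val_le {W : Type u} [MeasurableSpace W] (ν : Measure W) {s : Set W}
    (hs : MeasurableSet s) (h : W → ℝ≥0∞) : N (subMeasure ν s) (h ∘ (↑)) ≤ N ν h
  le_add_comp_val {W : Type u} [MeasurableSpace W] (ν : Measure W) {s t : Set W}
    (hs : MeasurableSet s) (ht : MeasurableSet t) (hst : s ∪ t = univ) (h : W → ℝ≥0∞) :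
    N ν h ≤ N (subMeasure ν s) (h ∘ (↑)) + N (subMeasure ν t) (h ∘ (↑))

section Instances

variable {p : ℝ≥0∞}

lemma isSplittableNorm_lpN (hp : 1 ≤ p) : IsSplittableNorm.{u} p (fun ν => lpN ν p) := by
  have hp0 : p ≠ 0 := (zero_lt_one.trans_le hp).ne'
  refine ⟨fun ν g h hgh => ?_, fun ν h c => ?_, fun ν s hs h => ?_, fun ν s t hs ht hst h => ?_⟩
  · rw [lpN_eq_eLpNorm hp0, lpN_eq_eLpNorm hp0]
    exact eLpNorm_mono_enorm fun x => hgh x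
  · rw [lpN_eq_eLpNorm hp0, lpN_eq_eLpNorm hp0]
    exact eLpNorm_sup_const_le hp h c
  · rw [lpN_subMeasure hp0 hs, lpN_eq_eLpNorm hp0]
    exact eLpNorm_mono_measure h Measure.restrict_le_self
  · rw [lpN_subMeasure hp0 hs, lpN_subMeasure hp0 ht, lpN_eq_eLpNorm hp0]
    exact (eLpNorm_mono_measure h (le_restrict_add_restrict hst)).trans
      (eLpNorm_add_measure_le hp h)

lemma isSplittableNorm_weakLpN (hp : 1 ≤ p) (hp_top : p ≠ ∞) :
    IsSplittableNorm.{u} p (fun ν => weakLpN ν p) := by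
  refine ⟨fun ν g h hgh => weakLpN_mono hgh, fun ν h c => weakLpN_sup_const_le hp hp_top h c,
    fun ν s hs h => ?_, fun ν s t hs ht hst h => ?_⟩
  · rw [weakLpN_subMeasure hs]
    exact weakLpN_mono_measure Measure.restrict_le_self h
  · rw [weakLpN_subMeasure hs, weakLpN_subMeasure ht]
    exact (weakLpN_mono_measure (le_restrict_add_restrict hst) h).trans
      (weakLpN_add_measure_le hp h)

end Instances

namespace IsSplittableNorm

variable {Z : Type u} [MeasurableSpace Z] {μ : Measure Z} {A B : Set Z} {p : ℝ≥0∞}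
  {N : ∀ {W : Type u} [MeasurableSpace W], Measure W → (W → ℝ≥0∞) → ℝ≥0∞}
  {TZ : (Z → ℝ≥0∞) → Z → ℝ≥0∞} {TA : (A → ℝ≥0∞) → A → ℝ≥0∞} {TB : (B → ℝ≥0∞) → B → ℝ≥0∞}

theorem isLpBounded_subMeasure (hN : IsSplittableNorm p N) (hp : 1 ≤ p) (hA : MeasurableSet A)
    (hAZ : ∀ f (x : A), TA (f ∘ (↑)) x ≤ TZ f x ⊔ ballAvg (subMeasure μ A) univ (f ∘ (↑)))
    (hZ : IsLpBounded (N μ) μ p TZ) :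
    IsLpBounded (N (subMeasure μ A)) (subMeasure μ A) p TA := by
  obtain ⟨C, hC, hbound⟩ := hZ
  refine ⟨C + 1, by finiteness, fun g hg => ?_⟩
  set ν := subMeasure μ A
  set f := Function.extend Subtype.val g (0 : Z → ℝ≥0∞)
  have hf : Measurable f :=
    (MeasurableEmbedding.subtype_coe hA).measurable_extend hg measurable_const
  have hcomp : TA g ≤ fun x : A => TZ f x ⊔ ballAvg ν univ g := fun x => by
    simpa only [f, Function.extend_comp Subtype.val_injective] using hAZ f x
  calc N ν (TA g) ≤ N ν (fun x : A => TZ f x ⊔ ballAvg ν univ g) := hN.mono ν hcomp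
    _ ≤ N ν (TZ f ∘ (↑)) + ballAvg ν univ g * ν univ ^ (1 / p.toReal) := hN.sup_const_le ν _ _
    _ ≤ N μ (TZ f) + lpN ν p g :=
        add_le_add (hN.comp_val_le μ hA _) (ballAvg_univ_mul_le_lpN hp hg)
    _ ≤ C * lpN ν p g + lpN ν p g := by
        rw [← lpN_extend_subtype (zero_lt_one.trans_le hp).ne' hA g]
        gcongr
        exact hbound f hf
    _ = (C + 1) * lpN ν p g := by ring

theorem comp_val_le_of_le_sup (hN : IsSplittableNorm p N) (hp : 1 ≤ p) (hA : MeasurableSet A)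
    (hZA : ∀ f (x : A), TZ f x ≤ TA (f ∘ (↑)) x ⊔ ballAvg μ univ f) {C : ℝ≥0∞}
    (hbound : ∀ g, Measurable g → N (subMeasure μ A) (TA g) ≤ C * lpN (subMeasure μ A) p g)
    {f : Z → ℝ≥0∞} (hf : Measurable f) :
    N (subMeasure μ A) (TZ f ∘ (↑)) ≤ (C + 1) * lpN μ p f := by
  set ν := subMeasure μ A
  calc N ν (TZ f ∘ (↑)) ≤ N ν (fun x => TA (f ∘ (↑)) x ⊔ ballAvg μ univ f) := hN.mono ν (hZA f)
    _ ≤ N ν (TA (f ∘ (↑))) + ballAvg μ univ f * ν univ ^ (1 / p.toReal) := hN.sup_const_le ν _ _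
    _ ≤ C * lpN ν p (f ∘ (↑)) + ballAvg μ univ f * μ univ ^ (1 / p.toReal) := by
        gcongr
        · exact hbound _ (hf.comp measurable_subtype_coe)
        · exact subMeasure_univ_le hA
    _ ≤ C * lpN μ p f + lpN μ p f := by
        gcongr
        · exact (isSplittableNorm_lpN hp).comp_val_le μ hA f
        · exact ballAvg_univ_mul_le_lpN hp hf
    _ = (C + 1) * lpN μ p f := by ring

theorem isLpBounded_of_subMeasure (hN : IsSplittableNorm p N) (hp : 1 ≤ p)
    (hA : MeasurableSet A) (hB : MeasurableSet B) (hcover : A ∪ B = univ)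
    (hZA : ∀ f (x : A), TZ f x ≤ TA (f ∘ (↑)) x ⊔ ballAvg μ univ f)
    (hZB : ∀ f (x : B), TZ f x ≤ TB (f ∘ (↑)) x ⊔ ballAvg μ univ f)
    (hTA : IsLpBounded (N (subMeasure μ A)) (subMeasure μ A) p TA)
    (hTB : IsLpBounded (N (subMeasure μ B)) (subMeasure μ B) p TB) :
    IsLpBounded (N μ) μ p TZ := by
  obtain ⟨CA, hCA, hboundA⟩ := hTA
  obtain ⟨CB, hCB, hboundB⟩ := hTB
  refine ⟨(CA + 1) + (CB + 1), by finiteness, fun f hf => ?_⟩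
  calc N μ (TZ f) ≤ N (subMeasure μ A) (TZ f ∘ (↑)) + N (subMeasure μ B) (TZ f ∘ (↑)) :=
        hN.le_add_comp_val μ hA hB hcover _
    _ ≤ (CA + 1) * lpN μ p f + (CB + 1) * lpN μ p f :=
        add_le_add (hN.comp_val_le_of_le_sup hp hA hZA hboundA hf)
          (hN.comp_val_le_of_le_sup hp hB hZB hboundB hf)
    _ = ((CA + 1) + (CB + 1)) * lpN μ p f := by ring

theorem isLpBounded_iff (hN : IsSplittableNorm p N) (hp : 1 ≤ p)
    (hA : MeasurableSet A) (hB : MeasurableSet B) (hcover : A ∪ B = univ)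
    (hZA : ∀ f (x : A), TZ f x ≤ TA (f ∘ (↑)) x ⊔ ballAvg μ univ f)
    (hAZ : ∀ f (x : A), TA (f ∘ (↑)) x ≤ TZ f x ⊔ ballAvg (subMeasure μ A) univ (f ∘ (↑)))
    (hZB : ∀ f (x : B), TZ f x ≤ TB (f ∘ (↑)) x ⊔ ballAvg μ univ f)
    (hBZ : ∀ f (x : B), TB (f ∘ (↑)) x ≤ TZ f x ⊔ ballAvg (subMeasure μ B) univ (f ∘ (↑))) :
    IsLpBounded (N μ) μ p TZ ↔ IsLpBounded (N (subMeasure μ A)) (subMeasure μ A) p TA ∧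
      IsLpBounded (N (subMeasure μ B)) (subMeasure μ B) p TB :=
  ⟨fun h => ⟨hN.isLpBounded_subMeasure hp hA hAZ h, hN.isLpBounded_subMeasure hp hB hBZ h⟩,
    fun h => hN.isLpBounded_of_subMeasure hp hA hB hcover hZA hZB h.1 h.2⟩

end IsSplittableNorm

section Geometry

variable {Z : Type*} [MetricSpace Z] {A B : Set Z} {R : ℝ}

lemma mem_of_dist_lt_of_cross (hcover : A ∪ B = univ)
    (hcross : ∀ a ∈ A, ∀ b ∈ B, dist a b = R) : ∀ a ∈ A, ∀ z, dist z a < R → z ∈ A :=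
  fun a ha z hz => (hcover ▸ mem_univ z : z ∈ A ∪ B).resolve_right fun hzB =>
    (hcross a ha z hzB ▸ dist_comm z a ▸ hz).false

lemma dist_le_of_cover (hcover : A ∪ B = univ) (hcross : ∀ a ∈ A, ∀ b ∈ B, dist a b = R)
    (hboundA : ∀ x ∈ A, ∀ y ∈ A, dist x y ≤ R) (hboundB : ∀ x ∈ B, ∀ y ∈ B, dist x y ≤ R)
    (x y : Z) : dist x y ≤ R := by
  rcases (hcover ▸ mem_univ x : x ∈ A ∪ B) with hx | hx <;>
    rcases (hcover ▸ mem_univ y : y ∈ A ∪ B) with hy | hy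
  · exact hboundA x hx y hy
  · exact (hcross x hx y hy).le
  · exact (dist_comm x y ▸ hcross y hy x hx).le
  · exact hboundB x hx y hy

lemma ball_eq_univ_of_lt (hdiam : ∀ x y : Z, dist x y ≤ R) (x : Z) {r : ℝ} (hr : R < r) :
    ball x r = univ :=
  eq_univ_of_forall fun y => (hdiam y x).trans_lt hr

end Geometry

section MaximalOperators

variable {Z : Type u} [MetricSpace Z] [MeasurableSpace Z] {μ : Measure Z} {A B : Set Z} {R : ℝ}

lemma ballAvg_subMeasure_ball (hA : MeasurableSet A)
    (hsep : ∀ a ∈ A, ∀ z, dist z a < R → z ∈ A) (f : Z → ℝ≥0∞) (x : A) {r : ℝ} (hr : r ≤ R) :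
    ballAvg (subMeasure μ A) (ball x r) (f ∘ (↑)) = ballAvg μ (ball (x : Z) r) f :=
  ballAvg_subMeasure_preimage hA (fun z hz => hsep x x.2 z (lt_of_lt_of_le hz hr)) f

lemma cenMax_le_cenMax_subMeasure_sup (hA : MeasurableSet A)
    (hsep : ∀ a ∈ A, ∀ z, dist z a < R → z ∈ A) (hdiam : ∀ x y : Z, dist x y ≤ R)
    (f : Z → ℝ≥0∞) (x : A) :
    cenMax μ f x ≤ cenMax (subMeasure μ A) (f ∘ (↑)) x ⊔ ballAvg μ univ f := by
  refine iSup₂_le fun r hr => ?_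
  rcases le_or_gt r R with hrR | hRr
  · rw [← ballAvg_subMeasure_ball hA hsep f x hrR]
    exact le_sup_of_le_left (le_iSup₂_of_le r hr le_rfl)
  · rw [ball_eq_univ_of_lt hdiam _ hRr]
    exact le_sup_right

lemma cenMax_subMeasure_le_cenMax_sup (hA : MeasurableSet A)
    (hsep : ∀ a ∈ A, ∀ z, dist z a < R → z ∈ A) (hdiam : ∀ x y : Z, dist x y ≤ R)
    (f : Z → ℝ≥0∞) (x : A) :
    cenMax (subMeasure μ A) (f ∘ (↑)) x ≤
      cenMax μ f x ⊔ ballAvg (subMeasure μ A) univ (f ∘ (↑)) := by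
  refine iSup₂_le fun r hr => ?_
  rcases le_or_gt r R with hrR | hRr
  · rw [ballAvg_subMeasure_ball hA hsep f x hrR]
    exact le_sup_of_le_left (le_iSup₂_of_le r hr le_rfl)
  · rw [ball_eq_univ_of_lt (fun y z : A => hdiam y z) x hRr]
    exact le_sup_right

lemma ncMax_le_ncMax_subMeasure_sup (hA : MeasurableSet A)
    (hsep : ∀ a ∈ A, ∀ z, dist z a < R → z ∈ A) (hdiam : ∀ x y : Z, dist x y ≤ R)
    (f : Z → ℝ≥0∞) (x : A) :
    ncMax μ f x ≤ ncMax (subMeasure μ A) (f ∘ (↑)) x ⊔ ballAvg μ univ f := by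
  refine iSup₂_le fun c r => iSup₂_le fun hr hxc => ?_
  rcases le_or_gt r R with hrR | hRr
  · have hc : c ∈ A := hsep x x.2 c (by rw [dist_comm]; exact lt_of_lt_of_le hxc hrR)
    rw [← ballAvg_subMeasure_ball hA hsep f ⟨c, hc⟩ hrR]
    exact le_sup_of_le_left (le_iSup₂_of_le ⟨c, hc⟩ r (le_iSup₂_of_le hr hxc le_rfl))
  · rw [ball_eq_univ_of_lt hdiam c hRr]
    exact le_sup_right

lemma ncMax_subMeasure_le_ncMax_sup (hA : MeasurableSet A)
    (hsep : ∀ a ∈ A, ∀ z, dist z a < R → z ∈ A) (hdiam : ∀ x y : Z, dist x y ≤ R)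
    (f : Z → ℝ≥0∞) (x : A) :
    ncMax (subMeasure μ A) (f ∘ (↑)) x ≤
      ncMax μ f x ⊔ ballAvg (subMeasure μ A) univ (f ∘ (↑)) := by
  refine iSup₂_le fun c r => iSup₂_le fun hr hxc => ?_
  rcases le_or_gt r R with hrR | hRr
  · rw [ballAvg_subMeasure_ball hA hsep f c hrR]
    exact le_sup_of_le_left (le_iSup₂_of_le (c : Z) r (le_iSup₂_of_le hr hxc le_rfl))
  · rw [ball_eq_univ_of_lt (fun y z : A => hdiam y z) c hRr]
    exact le_sup_right

variable {p : ℝ≥0∞} {N : ∀ {W : Type u} [MeasurableSpace W], Measure W → (W → ℝ≥0∞) → ℝ≥0∞}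

theorem IsSplittableNorm.isLpBounded_cenMax_iff (hN : IsSplittableNorm p N) (hp : 1 ≤ p)
    (hA : MeasurableSet A) (hB : MeasurableSet B) (hcover : A ∪ B = univ)
    (hsepA : ∀ a ∈ A, ∀ z, dist z a < R → z ∈ A) (hsepB : ∀ b ∈ B, ∀ z, dist z b < R → z ∈ B)
    (hdiam : ∀ x y : Z, dist x y ≤ R) :
    IsLpBounded (N μ) μ p (cenMax μ) ↔
      IsLpBounded (N (subMeasure μ A)) (subMeasure μ A) p (cenMax (subMeasure μ A)) ∧
      IsLpBounded (N (subMeasure μ B)) (subMeasure μ B) p (cenMax (subMeasure μ B)) :=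
  hN.isLpBounded_iff hp hA hB hcover
    (cenMax_le_cenMax_subMeasure_sup hA hsepA hdiam)
    (cenMax_subMeasure_le_cenMax_sup hA hsepA hdiam)
    (cenMax_le_cenMax_subMeasure_sup hB hsepB hdiam)
    (cenMax_subMeasure_le_cenMax_sup hB hsepB hdiam)

theorem IsSplittableNorm.isLpBounded_ncMax_iff (hN : IsSplittableNorm p N) (hp : 1 ≤ p)
    (hA : MeasurableSet A) (hB : MeasurableSet B) (hcover : A ∪ B = univ)
    (hsepA : ∀ a ∈ A, ∀ z, dist z a < R → z ∈ A) (hsepB : ∀ b ∈ B, ∀ z, dist z b < R → z ∈ B)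
    (hdiam : ∀ x y : Z, dist x y ≤ R) :
    IsLpBounded (N μ) μ p (ncMax μ) ↔
      IsLpBounded (N (subMeasure μ A)) (subMeasure μ A) p (ncMax (subMeasure μ A)) ∧
      IsLpBounded (N (subMeasure μ B)) (subMeasure μ B) p (ncMax (subMeasure μ B)) :=
  hN.isLpBounded_iff hp hA hB hcover
    (ncMax_le_ncMax_subMeasure_sup hA hsepA hdiam)
    (ncMax_subMeasure_le_ncMax_sup hA hsepA hdiam)
    (ncMax_le_ncMax_subMeasure_sup hB hsepB hdiam)
    (ncMax_subMeasure_le_ncMax_sup hB hsepB hdiam)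

end MaximalOperators

theorem maximal_disjoint_union_general {Z : Type*} [MetricSpace Z] [MeasurableSpace Z]
    (μ : Measure Z)
    (A B : Set Z) (hA : MeasurableSet A) (hB : MeasurableSet B)
    (hcover : A ∪ B = Set.univ)
    (hcross : ∀ a ∈ A, ∀ b ∈ B, dist a b = 2)
    (hboundA : ∀ x ∈ A, ∀ y ∈ A, dist x y ≤ 2)
    (hboundB : ∀ x ∈ B, ∀ y ∈ B, dist x y ≤ 2) :
    ∀ p : ℝ≥0∞, 1 ≤ p →
      (IsStrongType μ (ncMax μ) p ↔
        IsStrongType (subMeasure μ A) (ncMax (subMeasure μ A)) p ∧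
        IsStrongType (subMeasure μ B) (ncMax (subMeasure μ B)) p) ∧
      (IsWeakType μ (ncMax μ) p ↔
        IsWeakType (subMeasure μ A) (ncMax (subMeasure μ A)) p ∧
        IsWeakType (subMeasure μ B) (ncMax (subMeasure μ B)) p) ∧
      (IsStrongType μ (cenMax μ) p ↔
        IsStrongType (subMeasure μ A) (cenMax (subMeasure μ A)) p ∧
        IsStrongType (subMeasure μ B) (cenMax (subMeasure μ B)) p) ∧
      (IsWeakType μ (cenMax μ) p ↔
        IsWeakType (subMeasure μ A) (cenMax (subMeasure μ A)) p ∧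
        IsWeakType (subMeasure μ B) (cenMax (subMeasure μ B)) p) := by
  intro p hp
  have hsepA := mem_of_dist_lt_of_cross hcover hcross
  have hsepB := mem_of_dist_lt_of_cross (union_comm A B ▸ hcover)
    fun b hb a ha => dist_comm b a ▸ hcross a ha b hb
  have hdiam := dist_le_of_cover hcover hcross hboundA hboundB
  have hnc := fun {N} (hN : IsSplittableNorm p N) =>
    hN.isLpBounded_ncMax_iff (μ := μ) hp hA hB hcover hsepA hsepB hdiam
  have hcen := fun {N} (hN : IsSplittableNorm p N) =>
    hN.isLpBounded_cenMax_iff (μ := μ) hp hA hB hcover hsepA hsepB hdiam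
  have hstrong := isSplittableNorm_lpN hp
  rcases eq_or_ne p ∞ with rfl | hp_top
  · simp only [isWeakType_top]
    exact ⟨hnc hstrong, hnc hstrong, hcen hstrong, hcen hstrong⟩
  · have hweak := isSplittableNorm_weakLpN hp hp_top
    simp only [isWeakType_iff_isLpBounded hp_top]
    exact ⟨hnc hstrong, hnc hweak, hcen hstrong, hcen hweak⟩

/-- if `Z` is the disjoint union of `A` and `B`, with all distances
inside `A` and inside `B` at most `2` and all distances between `A` and `B` equal
to `2`, and the (finite) measure is the sum of the pieces, then for each `p ∈ [1,∞]`
the maximal operator on `Z` (centered or non-centered) is of strong (resp. weak)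
type `(p,p)` iff the maximal operators of both pieces are. -/
theorem maximal_disjoint_union {Z : Type*} [MetricSpace Z] [MeasurableSpace Z]
    (μ : Measure Z) [IsFiniteMeasure μ]
    (A B : Set Z) (hA : MeasurableSet A) (hB : MeasurableSet B)
    (hdisj : Disjoint A B) (hcover : A ∪ B = Set.univ)
    (hcross : ∀ a ∈ A, ∀ b ∈ B, dist a b = 2)
    (hboundA : ∀ x ∈ A, ∀ y ∈ A, dist x y ≤ 2)
    (hboundB : ∀ x ∈ B, ∀ y ∈ B, dist x y ≤ 2) :
    ∀ p : ℝ≥0∞, 1 ≤ p →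
      (IsStrongType μ (ncMax μ) p ↔
        IsStrongType (subMeasure μ A) (ncMax (subMeasure μ A)) p ∧
        IsStrongType (subMeasure μ B) (ncMax (subMeasure μ B)) p) ∧
      (IsWeakType μ (ncMax μ) p ↔
        IsWeakType (subMeasure μ A) (ncMax (subMeasure μ A)) p ∧
        IsWeakType (subMeasure μ B) (ncMax (subMeasure μ B)) p) ∧
      (IsStrongType μ (cenMax μ) p ↔
        IsStrongType (subMeasure μ A) (cenMax (subMeasure μ A)) p ∧
        IsStrongType (subMeasure μ B) (cenMax (subMeasure μ B)) p) ∧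
      (IsWeakType μ (cenMax μ) p ↔
        IsWeakType (subMeasure μ A) (cenMax (subMeasure μ A)) p ∧
        IsWeakType (subMeasure μ B) (cenMax (subMeasure μ B)) p) :=
  maximal_disjoint_union_general μ A B hA hB hcover hcross hboundA hboundB
end
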